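/- arXiv:2210.04070 — 10 statements merged into one kernel-verified Lean document; each statement's English description precedes it below -/
import Mathlib

section
/- If d ≥ 1, r is the greatest integer with 2^r - 1 ≤ d, and 1 ≤ a ≤ b ≤ r, then for all n ≥ 0 the number of partitions of n into parts from T_{a,d} is at most the number of partitions of n into parts from T_{b,d}. -/
/-- `rho A n` is the number of partitions of `n` all of whose parts lie in `A`. -/
noncomputable def rho (A : Set ℕ) (n : ℕ) : ℕ :=
  Nat.card {p : n.Partition // ∀ x ∈ p.parts, x ∈ A}

/-- `qpart a d n` is the number of partitions of `n` into parts that are all `≥ a`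
and pairwise differ by at least `d` (so, in particular, are distinct when `d ≥ 1`). -/
noncomputable def qpart (a d n : ℕ) : ℕ :=
  Nat.card {p : n.Partition //
    (∀ x ∈ p.parts, a ≤ x) ∧
    (∀ x ∈ p.parts, p.parts.count x ≤ 1) ∧
    (∀ x ∈ p.parts, ∀ y ∈ p.parts, x ≠ y → d ≤ max x y - min x y)}

/-- Positive integers congruent to `±a` modulo `m`, excluding `m - a`. -/
noncomputable def QminusSet (a m : ℕ) : Set ℕ :=
  {x | x % m = a % m ∨ x % m = (m - a) % m} \ {m - a}

/-- `Qminus a d n` counts partitions of `n` into parts `≡ ±a (mod d+3)`,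
excluding the part `d+3-a`. -/
noncomputable def Qminus (a d n : ℕ) : ℕ := rho (QminusSet a (d + 3)) n

/-- `Qmm a d n` counts partitions of `n` into parts `≡ ±a (mod d+3)`,
excluding both the parts `a` and `d+3-a`. -/
noncomputable def Qmm (a d n : ℕ) : ℕ := rho (QminusSet a (d + 3) \ {a}) n

/-- `Tset s d` is the set of naturals congruent to `1` or to `d + 2^j` for some
`1 ≤ j ≤ s - 1` modulo `2d`. -/
def Tset (s d : ℕ) : Set ℕ :=
  {y | y % (2 * d) = 1 % (2 * d) ∨
    ∃ j, 1 ≤ j ∧ j + 1 ≤ s ∧ y % (2 * d) = (d + 2 ^ j) % (2 * d)}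

/-- `T5 d` : naturals congruent to `1, d+2, d+4, d+8` or `d+16` modulo `2d`. -/
def T5 (d : ℕ) : Set ℕ := Tset 5 d

/-- `Sset d N` : naturals congruent to `±1` modulo `d-N+3`, excluding `d-N+2`. -/
def Sset (d N : ℕ) : Set ℕ :=
  {x | x % (d - N + 3) = 1 % (d - N + 3) ∨ x % (d - N + 3) = (d - N + 2) % (d - N + 3)}
    \ {d - N + 2}

/-- `xN d N i` is the `i`-th smallest element of `Sset d N` (1-indexed). -/
noncomputable def xN (d N i : ℕ) : ℕ := Nat.nth (· ∈ Sset d N) (i - 1)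

/-- `yT d i` is the `i`-th smallest element of `T5 d` (1-indexed). -/
noncomputable def yT (d i : ℕ) : ℕ := Nat.nth (· ∈ T5 d) (i - 1)

theorem stmt0 (d r a b : ℕ) (hd : 1 ≤ d)
    (hr1 : 2 ^ r - 1 ≤ d) (hr2 : ∀ r' : ℕ, 2 ^ r' - 1 ≤ d → r' ≤ r)
    (ha : 1 ≤ a) (hab : a ≤ b) (hbr : b ≤ r) :
    ∀ n : ℕ, rho (Tset a d) n ≤ rho (Tset b d) n := by
  intro n
  have hsub : Tset a d ⊆ Tset b d := by
    intro y hy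
    rcases hy with h | ⟨j, hj1, hj2, hj3⟩
    · exact Or.inl h
    · exact Or.inr ⟨j, hj1, hj2.trans hab, hj3⟩
  apply Nat.card_le_card_of_injective
    (fun p => (⟨p.1, fun x hx => hsub (p.2 x hx)⟩ :
      {p : n.Partition // ∀ x ∈ p.parts, x ∈ Tset b d}))
  intro p q h
  exact Subtype.ext (by simpa using h)
end

section
/- Let S = {x_i} and T = {y_i} be strictly increasing sequences of positive integers with y_1 = 1 and x_i ≥ y_i for all i ≥ 1. Then for every n ≥ 0, the number of partitions of n with parts in T is at least the number of partitions of n with parts in S. -/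
theorem stmt1 (x y : ℕ → ℕ) (hx : StrictMono x) (hy : StrictMono y)
    (hxpos : ∀ i, 0 < x i) (hy1 : y 0 = 1) (hxy : ∀ i, y i ≤ x i) :
    ∀ n : ℕ, rho (Set.range x) n ≤ rho (Set.range y) n := by
  classical
  intro n
  set g : ℕ → ℕ := fun v => y (Function.invFun x v) with hgdef
  have hgx : ∀ i, g (x i) = y i := by
    intro i
    simp only [hgdef]
    rw [Function.leftInverse_invFun hx.injective i]
  have hypos : ∀ i, 1 ≤ y i := by
    intro i
    have := hy.monotone (Nat.zero_le i)
    omega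
  -- the map on multisets
  have key : ∀ (p : {p : n.Partition // ∀ v ∈ p.parts, v ∈ Set.range x}),
      (p.1.parts.map g).sum ≤ n := by
    rintro ⟨p, hp⟩
    have h1 : (p.parts.map g).sum ≤ (p.parts.map id).sum := by
      apply Multiset.sum_map_le_sum_map
      intro v hv
      obtain ⟨i, rfl⟩ := hp v hv
      rw [hgx]
      exact hxy i
    simpa [p.parts_sum] using h1
  let f : {p : n.Partition // ∀ v ∈ p.parts, v ∈ Set.range x} →
      {p : n.Partition // ∀ v ∈ p.parts, v ∈ Set.range y} := fun p =>
    ⟨⟨p.1.parts.map g + Multiset.replicate (n - (p.1.parts.map g).sum) 1, by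
        intro v hv
        rcases Multiset.mem_add.1 hv with hv | hv
        · obtain ⟨w, hw, rfl⟩ := Multiset.mem_map.1 hv
          obtain ⟨i, rfl⟩ := p.2 w hw
          rw [hgx]
          exact hypos i
        · rw [Multiset.eq_of_mem_replicate hv]; exact one_pos, by
        rw [Multiset.sum_add, Multiset.sum_replicate, smul_eq_mul, mul_one]
        have := key p
        omega⟩, by
      intro v hv
      rcases Multiset.mem_add.1 hv with hv | hv
      · obtain ⟨w, hw, rfl⟩ := Multiset.mem_map.1 hv
        obtain ⟨i, rfl⟩ := p.2 w hw
        rw [hgx]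
        exact ⟨i, rfl⟩
      · rw [Multiset.eq_of_mem_replicate hv]
        exact ⟨0, hy1⟩⟩
  have hfinj : Function.Injective f := by
    rintro ⟨p, hp⟩ ⟨q, hq⟩ hpq
    have hm : p.parts.map g + Multiset.replicate (n - (p.parts.map g).sum) 1
        = q.parts.map g + Multiset.replicate (n - (q.parts.map g).sum) 1 := by
      have := congrArg (fun r => r.1.parts) hpq
      simpa [f] using this
    -- compare the parts ≠ 1
    have hfilt : ∀ (r : n.Partition), (∀ v ∈ r.parts, v ∈ Set.range x) →
        Multiset.filter (fun v => v ≠ 1)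
          (r.parts.map g + Multiset.replicate (n - (r.parts.map g).sum) 1)
        = (Multiset.filter (fun w => w ≠ x 0) r.parts).map g := by
      intro r hr
      rw [Multiset.filter_add, Multiset.filter_map]
      have h2 : Multiset.filter ((fun v => v ≠ 1) ∘ g) r.parts
          = Multiset.filter (fun w => w ≠ x 0) r.parts := by
        apply Multiset.filter_congr
        intro w hw
        obtain ⟨i, rfl⟩ := hr w hw
        simp only [Function.comp, hgx]
        constructor
        · intro h hc
          exact h (by rw [hx.injective hc, hy1])
        · intro h hc
          apply h
          have : y i = y 0 := by rw [hy1]; exact hc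
          rw [hy.injective this]
      rw [h2]
      have h3 : Multiset.filter (fun v => v ≠ 1)
          (Multiset.replicate (n - (r.parts.map g).sum) 1) = 0 := by
        rw [Multiset.filter_eq_nil]
        intro a ha
        rw [Multiset.eq_of_mem_replicate ha]
        simp
      rw [h3, add_zero]
    have hA : (Multiset.filter (fun w => w ≠ x 0) p.parts).map g
        = (Multiset.filter (fun w => w ≠ x 0) q.parts).map g := by
      rw [← hfilt p hp, ← hfilt q hq, hm]
    -- recover the filtered multisets
    have hback : ∀ (r : n.Partition), (∀ v ∈ r.parts, v ∈ Set.range x) →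
        ((Multiset.filter (fun w => w ≠ x 0) r.parts).map g).map
          (fun v => x (Function.invFun y v))
        = Multiset.filter (fun w => w ≠ x 0) r.parts := by
      intro r hr
      rw [Multiset.map_map]
      have : ∀ w ∈ Multiset.filter (fun w => w ≠ x 0) r.parts,
          ((fun v => x (Function.invFun y v)) ∘ g) w = id w := by
        intro w hw
        obtain ⟨i, rfl⟩ := hr w (Multiset.mem_of_mem_filter hw)
        simp only [Function.comp, hgx, id]
        rw [Function.leftInverse_invFun hy.injective i]
      rw [Multiset.map_congr rfl this, Multiset.map_id]
    have hAeq : Multiset.filter (fun w => w ≠ x 0) p.parts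
        = Multiset.filter (fun w => w ≠ x 0) q.parts := by
      rw [← hback p hp, ← hback q hq, hA]
    -- counts of x 0 agree by the sum
    have hdecomp : ∀ (r : n.Partition),
        r.parts = Multiset.replicate (r.parts.count (x 0)) (x 0)
          + Multiset.filter (fun w => w ≠ x 0) r.parts := by
      intro r
      have h := (Multiset.filter_add_not (fun w => w = x 0) r.parts).symm
      rw [Multiset.filter_eq'] at h
      simpa using h
    have hsum : ∀ (r : n.Partition),
        r.parts.count (x 0) * x 0
          + (Multiset.filter (fun w => w ≠ x 0) r.parts).sum = n := by
      intro r
      have := r.parts_sum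
      conv_lhs at this => rw [hdecomp r]
      rw [Multiset.sum_add, Multiset.sum_replicate, smul_eq_mul] at this
      omega
    have hc : p.parts.count (x 0) = q.parts.count (x 0) := by
      have h1 := hsum p
      have h2 := hsum q
      rw [hAeq] at h1
      have hx0 : 0 < x 0 := hxpos 0
      have : p.parts.count (x 0) * x 0 = q.parts.count (x 0) * x 0 := by omega
      exact Nat.eq_of_mul_eq_mul_right hx0 this
    have : p.parts = q.parts := by
      rw [hdecomp p, hdecomp q, hc, hAeq]
    apply Subtype.ext
    exact Nat.Partition.ext this
  exact Nat.card_le_card_of_injective f hfinj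
end

section
/- Fix N ≥ 2 and d ≥ max{31, 6N−17}. Let x_i^N denote the i-th smallest element of S_d^N and y_i the i-th smallest element of T_{5,d}. Then x_i^N − y_i ≥ 0 for all i ≥ 3, and the minimum over i ≥ 3 of x_i^N − y_i equals min{d−2N−1, d−6N+17}. -/
/- ### Auxiliary machinery -/

theorem nth_of_strictMono' {p : ℕ → Prop} {f : ℕ → ℕ} (hmono : StrictMono f)
    (hmem : ∀ n, p (f n)) (hsurj : ∀ m, p m → ∃ n, f n = m) :
    ∀ n, Nat.nth p n = f n := by
  intro n
  induction n using Nat.strong_induction_on with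
  | _ n ih =>
    rw [Nat.nth_eq_sInf]
    have hset : {x | p x ∧ ∀ k < n, Nat.nth p k < x} = {x | p x ∧ ∀ k < n, f k < x} := by
      ext x; simp only [Set.mem_setOf_eq]
      constructor <;> rintro ⟨h1, h2⟩ <;> refine ⟨h1, fun k hk => ?_⟩
      · have := h2 k hk; rwa [ih k hk] at this
      · have := h2 k hk; rwa [ih k hk]
    rw [hset]
    have hfn : f n ∈ {x | p x ∧ ∀ k < n, f k < x} := ⟨hmem n, fun k hk => hmono hk⟩
    apply le_antisymm (Nat.sInf_le hfn)
    apply le_csInf ⟨f n, hfn⟩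
    rintro x ⟨hx, hlt⟩
    obtain ⟨j, rfl⟩ := hsurj x hx
    by_contra h
    push_neg at h
    have hj : j < n := by
      by_contra hj; push_neg at hj
      exact absurd (hmono.le_iff_le.mpr hj) (not_le.mpr h)
    exact lt_irrefl _ (hlt j hj)

def fS (m k : ℕ) : ℕ :=
  if k = 0 then 1 else if k % 2 = 1 then ((k+1)/2)*m + 1 else (k/2)*m + (m-1)

def pS (m : ℕ) (x : ℕ) : Prop :=
  (x % m = 1 % m ∨ x % m = (m-1) % m) ∧ ¬ x = m - 1

def fT (d k : ℕ) : ℕ :=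
  2*(k/5)*d + (if k%5 = 0 then 1 else if k%5 = 1 then d+2 else
    if k%5 = 2 then d+4 else if k%5 = 3 then d+8 else d+16)

def pT (d : ℕ) (y : ℕ) : Prop :=
  y % (2 * d) = 1 % (2 * d) ∨
    ∃ j, 1 ≤ j ∧ j + 1 ≤ 5 ∧ y % (2 * d) = (d + 2 ^ j) % (2 * d)

lemma fS_odd (m j : ℕ) : fS m (2*j+1) = (j+1)*m + 1 := by
  have h1 : (2*j+1) % 2 = 1 := by omega
  have h2 : (2*j+1+1)/2 = j+1 := by omega
  simp [fS, h1, h2]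

lemma fS_even (m j : ℕ) (hj : 1 ≤ j) : fS m (2*j) = j*m + (m-1) := by
  have h0 : 2*j ≠ 0 := by omega
  have h1 : (2*j) % 2 = 0 := by omega
  have h2 : (2*j)/2 = j := by omega
  simp [fS, h0, h1, h2]

lemma fS_mono (m : ℕ) (hm : 3 ≤ m) : StrictMono (fS m) := by
  apply strictMono_nat_of_lt_succ
  intro k
  rcases Nat.even_or_odd k with ⟨j, hj⟩ | ⟨j, hj⟩
  · subst hj
    rcases Nat.eq_zero_or_pos j with rfl | hj
    · show fS m 0 < fS m 1
      have : fS m 1 = 1*m+1 := by have := fS_odd m 0; simpa using this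
      simp [fS, this]; omega
    · have e1 : j + j = 2*j := by omega
      rw [e1, fS_even m j hj, fS_odd m j]
      have : (j+1)*m = j*m + m := by ring
      omega
  · subst hj
    have e1 : 2*j+1+1 = 2*(j+1) := by ring
    rw [fS_odd m j, e1, fS_even m (j+1) (by omega)]
    omega

lemma fS_mem (m : ℕ) (hm : 3 ≤ m) (k : ℕ) : pS m (fS m k) := by
  have h1m : 1 % m = 1 := Nat.mod_eq_of_lt (by omega)
  rcases Nat.eq_zero_or_pos k with rfl | hk
  · constructor
    · left; simp [fS, h1m]
    · simp [fS]; omega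
  rcases Nat.even_or_odd k with ⟨j, hj⟩ | ⟨j, hj⟩
  · have hj1 : 1 ≤ j := by omega
    have e : k = 2*j := by omega
    rw [e, fS_even m j hj1]
    have hmul : m ≤ j*m := Nat.le_mul_of_pos_left m (by omega)
    constructor
    · right; rw [Nat.mul_add_mod']
    · omega
  · have e : k = 2*j+1 := by omega
    rw [e, fS_odd m j]
    have hmul : m ≤ (j+1)*m := Nat.le_mul_of_pos_left m (by omega)
    constructor
    · left; rw [Nat.mul_add_mod']
    · omega

lemma fS_surj (m : ℕ) (hm : 3 ≤ m) (x : ℕ) (hx : pS m x) : ∃ k, fS m k = x := by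
  obtain ⟨h1 | h1, h2⟩ := hx
  · rw [Nat.mod_eq_of_lt (show 1 < m by omega)] at h1
    have hq := Nat.div_add_mod x m
    rcases Nat.eq_zero_or_pos (x/m) with h0 | h0
    · refine ⟨0, ?_⟩
      rw [show fS m 0 = 1 from rfl]
      rw [h0, Nat.mul_zero] at hq
      omega
    · refine ⟨2*(x/m - 1)+1, ?_⟩
      rw [fS_odd]
      have e : (x/m - 1 + 1) = x/m := by omega
      rw [e, mul_comm]
      omega
  · rw [Nat.mod_eq_of_lt (show m-1 < m by omega)] at h1
    have hq := Nat.div_add_mod x m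
    have h0 : 1 ≤ x/m := by
      rcases Nat.eq_zero_or_pos (x/m) with h0 | h0
      · exfalso; apply h2
        rw [h0, Nat.mul_zero] at hq
        omega
      · exact h0
    refine ⟨2*(x/m), ?_⟩
    rw [fS_even m _ h0, mul_comm]
    omega

lemma fS_shift (m k : ℕ) (hk : 1 ≤ k) : fS m (k+10) = fS m k + 5*m := by
  rcases Nat.even_or_odd k with ⟨j, hj⟩ | ⟨j, hj⟩
  · have hj1 : 1 ≤ j := by omega
    have e : k = 2*j := by omega
    have e2 : 2*j+10 = 2*(j+5) := by ring
    rw [e, e2, fS_even m (j+5) (by omega), fS_even m j hj1]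
    have : (j+5)*m = j*m + 5*m := by ring
    omega
  · have e : k = 2*j+1 := by omega
    have e2 : 2*j+1+10 = 2*(j+5)+1 := by ring
    rw [e, e2, fS_odd m (j+5), fS_odd m j]
    have : (j+5+1)*m = (j+1)*m + 5*m := by ring
    omega

lemma fT_mono (d : ℕ) (hd : 17 ≤ d) : StrictMono (fT d) := by
  apply strictMono_nat_of_lt_succ
  intro k
  unfold fT
  have h5 : k%5 = 0 ∨ k%5 = 1 ∨ k%5 = 2 ∨ k%5 = 3 ∨ k%5 = 4 := by omega
  rcases h5 with h | h | h | h | h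
  · have e1 : (k+1)/5 = k/5 := by omega
    have e2 : (k+1)%5 = 1 := by omega
    simp [h, e1, e2]
  · have e1 : (k+1)/5 = k/5 := by omega
    have e2 : (k+1)%5 = 2 := by omega
    simp [h, e1, e2]
  · have e1 : (k+1)/5 = k/5 := by omega
    have e2 : (k+1)%5 = 3 := by omega
    simp [h, e1, e2]
  · have e1 : (k+1)/5 = k/5 := by omega
    have e2 : (k+1)%5 = 4 := by omega
    simp [h, e1, e2]
  · have e1 : (k+1)/5 = k/5 + 1 := by omega
    have e2 : (k+1)%5 = 0 := by omega
    simp only [h, e1, e2]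
    have : 2*(k/5+1)*d = 2*(k/5)*d + 2*d := by ring
    norm_num [this]
    omega

lemma fT_shift (d k : ℕ) : fT d (k+10) = fT d k + 4*d := by
  unfold fT
  have h1 : (k+10)/5 = k/5 + 2 := by omega
  have h2 : (k+10)%5 = k%5 := by omega
  rw [h1, h2]
  have : 2*(k/5+2)*d = 2*(k/5)*d + 4*d := by ring
  omega

lemma fT_mem (d : ℕ) (hd : 17 ≤ d) (k : ℕ) : pT d (fT d k) := by
  unfold fT pT
  have hmod : ∀ c : ℕ, (2*(k/5)*d + c) % (2*d) = c % (2*d) := by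
    intro c
    have e : 2*(k/5)*d + c = c + (k/5)*(2*d) := by ring
    rw [e, Nat.add_mul_mod_self_right]
  have h5 : k%5 = 0 ∨ k%5 = 1 ∨ k%5 = 2 ∨ k%5 = 3 ∨ k%5 = 4 := by omega
  rcases h5 with h | h | h | h | h <;> simp only [h] <;> norm_num <;> rw [hmod]
  · left; rfl
  · exact Or.inr ⟨1, by norm_num, by norm_num, by norm_num⟩
  · exact Or.inr ⟨2, by norm_num, by norm_num, by norm_num⟩
  · exact Or.inr ⟨3, by norm_num, by norm_num, by norm_num⟩
  · exact Or.inr ⟨4, by norm_num, by norm_num, by norm_num⟩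

lemma fT_surj (d : ℕ) (hd : 17 ≤ d) (y : ℕ) (hy : pT d y) : ∃ k, fT d k = y := by
  have hq := Nat.div_add_mod y (2*d)
  have key : ∀ r c : ℕ, r ≤ 4 → y % (2*d) = c →
      (if r = 0 then 1 else if r = 1 then d+2 else
        if r = 2 then d+4 else if r = 3 then d+8 else d+16) = c →
      ∃ k, fT d k = y := by
    intro r c hr hyc hc
    refine ⟨5*(y/(2*d)) + r, ?_⟩
    unfold fT
    have e1 : (5*(y/(2*d))+r)/5 = y/(2*d) := by omega
    have e2 : (5*(y/(2*d))+r)%5 = r := by omega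
    rw [e1, e2, hc]
    have e3 : 2*(y/(2*d))*d = (2*d)*(y/(2*d)) := by ring
    rw [e3]
    omega
  rcases hy with h | ⟨j, hj1, hj5, h⟩
  · have h1 : 1 % (2*d) = 1 := Nat.mod_eq_of_lt (by omega)
    rw [h1] at h
    exact key 0 1 (by norm_num) h (by norm_num)
  · have hj4 : j ≤ 4 := by omega
    interval_cases j
    · have hc : (d+2^1) % (2*d) = d+2 := by
        rw [pow_one]; exact Nat.mod_eq_of_lt (by omega)
      rw [hc] at h
      exact key 1 (d+2) (by norm_num) h (by norm_num)
    · have hc : (d+2^2) % (2*d) = d+4 := by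
        norm_num; exact Nat.mod_eq_of_lt (by omega)
      rw [hc] at h
      exact key 2 (d+4) (by norm_num) h (by norm_num)
    · have hc : (d+2^3) % (2*d) = d+8 := by
        norm_num; exact Nat.mod_eq_of_lt (by omega)
      rw [hc] at h
      exact key 3 (d+8) (by norm_num) h (by norm_num)
    · have hc : (d+2^4) % (2*d) = d+16 := by
        norm_num; exact Nat.mod_eq_of_lt (by omega)
      rw [hc] at h
      exact key 4 (d+16) (by norm_num) h (by norm_num)

theorem stmt3 (N d : ℕ) (hN : 2 ≤ N) (hd : max 31 (6 * N - 17) ≤ d) :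
    (∀ i, 3 ≤ i → (yT d i : ℤ) ≤ (xN d N i : ℤ)) ∧
    IsLeast {v : ℤ | ∃ i, 3 ≤ i ∧ v = (xN d N i : ℤ) - (yT d i : ℤ)}
      (min ((d : ℤ) - 2 * N - 1) ((d : ℤ) - 6 * N + 17)) := by
  have hd31 : 31 ≤ d := le_trans (le_max_left _ _) hd
  have hd6N : 6 * N - 17 ≤ d := le_trans (le_max_right _ _) hd
  obtain ⟨m, hm⟩ : ∃ m, d - N + 3 = m := ⟨_, rfl⟩
  have hm3 : 3 ≤ m := by omega
  have hd17 : 17 ≤ d := by omega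
  have hset : (fun x => x ∈ Sset d N) = pS m := by
    funext x
    simp only [Sset, pS, Set.mem_diff, Set.mem_setOf_eq, Set.mem_singleton_iff, eq_iff_iff,
      hm, show d - N + 2 = m - 1 by omega]
  have hsetT : (fun y => y ∈ T5 d) = pT d := by
    funext y
    simp only [T5, Tset, pT, Set.mem_setOf_eq]
  have hxN : ∀ i, xN d N i = fS m (i - 1) := by
    intro i
    unfold xN
    rw [hset]
    exact nth_of_strictMono' (fS_mono m hm3) (fS_mem m hm3) (fS_surj m hm3) (i - 1)
  have hyT : ∀ i, yT d i = fT d (i - 1) := by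
    intro i
    unfold yT
    rw [hsetT]
    exact nth_of_strictMono' (fT_mono d hd17) (fT_mem d hd17) (fT_surj d hd17) (i - 1)
  have key : ∀ k, 2 ≤ k →
      min ((d : ℤ) - 2 * N - 1) ((d : ℤ) - 6 * N + 17) ≤ (fS m k : ℤ) - (fT d k : ℤ) := by
    intro k
    induction k using Nat.strong_induction_on with
    | _ k ih =>
      intro hk2
      by_cases hk11 : k ≤ 11
      · interval_cases k <;> norm_num [fS, fT] <;> omega
      · have hlt : k - 10 < k := by omega
        have h2 : 2 ≤ k - 10 := by omega
        have ihk := ih (k - 10) hlt h2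
        rw [show k = (k - 10) + 10 by omega, fS_shift m (k - 10) (by omega),
          fT_shift d (k - 10)]
        push_cast
        omega
  constructor
  · intro i hi
    have hk := key (i - 1) (by omega)
    rw [hxN i, hyT i]
    omega
  · constructor
    · by_cases hN4 : N ≤ 4
      · refine ⟨4, by norm_num, ?_⟩
        rw [hxN, hyT]
        norm_num [fS, fT]
        omega
      · refine ⟨12, by norm_num, ?_⟩
        rw [hxN, hyT]
        norm_num [fS, fT]
        omega
    · rintro v ⟨i, hi, rfl⟩
      rw [hxN, hyT]
      exact key (i - 1) (by omega)
end

section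
/- Fix N ≥ 2 and d ≥ max{31, 6N−17}. With x_i^N the i-th smallest element of S_d^N and y_i the i-th smallest element of T_{5,d}, for all i ≥ 3 one has x_{i+10}^N − y_{i+10} = (x_i^N − y_i) + (d − 5N + 15). -/
/-!
Both sets are eventually arithmetic progressions of blocks: with `m = d - N + 3`, from its
second element on `S_d^N` consists of the pairs `km - 1, km + 1`, two elements per period `m`,
while `T_{5,d}` consists of five elements per period `2d` (this needs `d > 16`, so that the
residues `1 < d + 2 < ⋯ < d + 16` stay below `2d`). Ten steps therefore advance `x` by `5m`
and `y` by `4d`, and `5m - 4d = d - 5N + 15`.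
-/

theorem Nat.nth_eq_of_strictMono {p : ℕ → Prop} {f : ℕ → ℕ} (hf : StrictMono f)
    (hr : Set.range f = Set.ofPred p) : Nat.nth p = f := by
  have hinf : (Set.ofPred p).Infinite := hr ▸ Set.infinite_range_of_injective hf.injective
  exact ((Nat.nth_strictMono hinf).range_inj hf).1
    ((Nat.range_nth_of_infinite hinf).trans hr.symm)

/-- The increasing enumeration `1, m + 1, 2m - 1, 2m + 1, 3m - 1, …` of the naturals
`≡ ±1 (mod m)` other than `m - 1`. -/
def pmOneEnum (m n : ℕ) : ℕ :=
  (n + 1) / 2 * m + if n ≠ 0 ∧ n % 2 = 0 then m - 1 else 1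

section pmOneEnum

variable {m : ℕ}

theorem pmOneEnum_zero (m : ℕ) : pmOneEnum m 0 = 1 := by
  simp [pmOneEnum]

theorem pmOneEnum_odd (m k : ℕ) : pmOneEnum m (2 * k + 1) = (k + 1) * m + 1 := by
  simp only [pmOneEnum, if_neg (show ¬(2 * k + 1 ≠ 0 ∧ (2 * k + 1) % 2 = 0) by omega)]
  congr 2
  omega

theorem pmOneEnum_even (m k : ℕ) : pmOneEnum m (2 * k + 2) = (k + 1) * m + (m - 1) := by
  simp only [pmOneEnum, if_pos (show 2 * k + 2 ≠ 0 ∧ (2 * k + 2) % 2 = 0 by omega)]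
  congr 2
  omega

theorem pmOneEnum_add_two_mul {n : ℕ} (hn : n ≠ 0) (k : ℕ) :
    pmOneEnum m (n + 2 * k) = pmOneEnum m n + k * m := by
  simp only [pmOneEnum, show (n + 2 * k + 1) / 2 = (n + 1) / 2 + k by omega,
    show n + 2 * k ≠ 0 ∧ (n + 2 * k) % 2 = 0 ↔ n ≠ 0 ∧ n % 2 = 0 by omega]
  ring

theorem exists_eq_odd_or_even_or_zero (n : ℕ) :
    (∃ k, n = 2 * k + 1 ∨ n = 2 * k + 2) ∨ n = 0 := by
  rcases n with _ | n
  · exact .inr rfl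
  · exact .inl ⟨n / 2, by omega⟩

theorem strictMono_pmOneEnum (hm : 3 ≤ m) : StrictMono (pmOneEnum m) := by
  refine strictMono_nat_of_lt_succ fun n => ?_
  obtain ⟨k, rfl | rfl⟩ | rfl := exists_eq_odd_or_even_or_zero n
  · rw [pmOneEnum_odd, pmOneEnum_even]
    omega
  · rw [show 2 * k + 2 + 1 = 2 * (k + 1) + 1 by ring, pmOneEnum_odd, pmOneEnum_even,
      add_mul (k + 1), one_mul]
    omega
  · rw [pmOneEnum_zero, show 0 + 1 = 2 * 0 + 1 from rfl, pmOneEnum_odd]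
    omega

theorem range_pmOneEnum (hm : 3 ≤ m) :
    Set.range (pmOneEnum m) = {x | x % m = 1 ∨ x % m = m - 1} \ {m - 1} := by
  ext x
  simp only [Set.mem_range, Set.mem_sdiff, Set.mem_ofPred_eq, Set.mem_singleton_iff]
  constructor
  · rintro ⟨n, rfl⟩
    obtain ⟨k, rfl | rfl⟩ | rfl := exists_eq_odd_or_even_or_zero n
    · rw [pmOneEnum_odd, Nat.mul_add_mod_of_lt (by omega)]
      have := Nat.le_mul_of_pos_left m (by omega : 0 < k + 1)
      omega
    · rw [pmOneEnum_even, Nat.mul_add_mod_of_lt (by omega)]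
      have := Nat.le_mul_of_pos_left m (by omega : 0 < k + 1)
      omega
    · rw [pmOneEnum_zero, Nat.mod_eq_of_lt (by omega)]
      omega
  · rintro ⟨hr, hx⟩
    obtain ⟨q, r, hr', rfl⟩ : ∃ q r, r < m ∧ x = q * m + r :=
      ⟨x / m, x % m, Nat.mod_lt _ (by omega), (Nat.div_add_mod' x m).symm⟩
    rw [Nat.mul_add_mod_of_lt hr'] at hr
    rcases q with _ | k
    · exact ⟨0, by rw [pmOneEnum_zero]; omega⟩
    · rcases hr with rfl | rfl
      · exact ⟨2 * k + 1, pmOneEnum_odd m k⟩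
      · exact ⟨2 * k + 2, pmOneEnum_even m k⟩

end pmOneEnum

/-- For `r < s`, the residues modulo `2d` that define `Tset s d`. -/
def tsetResidue (d r : ℕ) : ℕ := if r = 0 then 1 else d + 2 ^ r

def tsetEnum (s d n : ℕ) : ℕ := 2 * d * (n / s) + tsetResidue d (n % s)

section tsetEnum

variable {s d : ℕ}

theorem tsetResidue_lt_succ (d r : ℕ) : tsetResidue d r < tsetResidue d (r + 1) := by
  rcases r with _ | r
  · simp [tsetResidue]
  · simp only [tsetResidue, Nat.succ_ne_zero, if_false, pow_succ 2 (r + 1)]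
    have := Nat.two_pow_pos (r + 1)
    omega

theorem tsetResidue_lt (hd : 2 ^ (s - 1) < d) {r : ℕ} (hr : r < s) :
    tsetResidue d r < 2 * d := by
  have : 2 ^ r ≤ 2 ^ (s - 1) := Nat.pow_le_pow_right two_pos (by omega)
  have := Nat.two_pow_pos r
  unfold tsetResidue
  split_ifs <;> omega

theorem tsetEnum_mul_add (q : ℕ) {r : ℕ} (hr : r < s) :
    tsetEnum s d (s * q + r) = 2 * d * q + tsetResidue d r := by
  rw [tsetEnum, Nat.mul_add_div (by omega), Nat.div_eq_of_lt hr, Nat.mul_add_mod,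
    Nat.mod_eq_of_lt hr, add_zero]

theorem tsetEnum_add_mul (hs : 0 < s) (n k : ℕ) :
    tsetEnum s d (n + k * s) = tsetEnum s d n + k * (2 * d) := by
  rw [tsetEnum, tsetEnum, Nat.add_mul_div_right _ _ hs, Nat.add_mul_mod_self_right]
  ring

theorem strictMono_tsetEnum (hs : 0 < s) (hd : 2 ^ (s - 1) < d) : StrictMono (tsetEnum s d) := by
  refine strictMono_nat_of_lt_succ fun n => ?_
  obtain ⟨q, r, hr, rfl⟩ : ∃ q r, r < s ∧ n = s * q + r :=
    ⟨n / s, n % s, Nat.mod_lt _ hs, (Nat.div_add_mod n s).symm⟩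
  rw [tsetEnum_mul_add q hr]
  rcases (show r + 1 ≤ s from hr).lt_or_eq with hr' | hr'
  · rw [add_assoc, tsetEnum_mul_add q hr']
    exact Nat.add_lt_add_left (tsetResidue_lt_succ d r) _
  · rw [add_assoc, hr', ← mul_add_one, ← add_zero (s * (q + 1)), tsetEnum_mul_add _ hs,
      mul_add_one]
    have := tsetResidue_lt hd hr
    rw [show tsetResidue d 0 = 1 from if_pos rfl]
    omega

theorem mem_Tset_iff (hs : 0 < s) (hd : 2 ^ (s - 1) < d) {x : ℕ} :
    x ∈ Tset s d ↔ ∃ r < s, x % (2 * d) = tsetResidue d r := by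
  have hmod {r : ℕ} (hr : r < s) : tsetResidue d r % (2 * d) = tsetResidue d r :=
    Nat.mod_eq_of_lt (tsetResidue_lt hd hr)
  have hmod₀ : 1 % (2 * d) = 1 := hmod hs
  constructor
  · rintro (hx | ⟨j, hj, hjs, hx⟩)
    · exact ⟨0, hs, hx.trans hmod₀⟩
    · have hres : tsetResidue d j = d + 2 ^ j := if_neg (by omega)
      exact ⟨j, hjs, by rw [hx, ← hres, hmod hjs]⟩
  · rintro ⟨_ | r, hr, hx⟩
    · exact .inl (hx.trans hmod₀.symm)
    · have hres : tsetResidue d (r + 1) = d + 2 ^ (r + 1) := if_neg r.succ_ne_zero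
      exact .inr ⟨r + 1, by omega, hr, by rw [hx, ← hres, hmod hr]⟩

theorem range_tsetEnum (hs : 0 < s) (hd : 2 ^ (s - 1) < d) :
    Set.range (tsetEnum s d) = Tset s d := by
  ext x
  rw [mem_Tset_iff hs hd]
  constructor
  · rintro ⟨n, rfl⟩
    refine ⟨n % s, Nat.mod_lt _ hs, ?_⟩
    rw [tsetEnum, Nat.mul_add_mod, Nat.mod_eq_of_lt (tsetResidue_lt hd (Nat.mod_lt _ hs))]
  · rintro ⟨r, hr, hx⟩
    refine ⟨s * (x / (2 * d)) + r, ?_⟩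
    rw [tsetEnum_mul_add _ hr, ← hx, Nat.div_add_mod]

end tsetEnum

theorem Sset_eq (d N : ℕ) :
    Sset d N = {x | x % (d - N + 3) = 1 ∨ x % (d - N + 3) = d - N + 3 - 1} \ {d - N + 3 - 1} := by
  rw [Sset, Nat.mod_eq_of_lt (show 1 < d - N + 3 by omega),
    Nat.mod_eq_of_lt (show d - N + 2 < d - N + 3 by omega), show d - N + 2 = d - N + 3 - 1 by omega]

theorem nth_Sset_eq (d N : ℕ) : Nat.nth (· ∈ Sset d N) = pmOneEnum (d - N + 3) :=
  Nat.nth_eq_of_strictMono (strictMono_pmOneEnum (by omega))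
    ((range_pmOneEnum (by omega)).trans (Sset_eq d N).symm)

theorem nth_T5_eq {d : ℕ} (hd : 16 < d) : Nat.nth (· ∈ T5 d) = tsetEnum 5 d :=
  Nat.nth_eq_of_strictMono (strictMono_tsetEnum (by norm_num) hd) (range_tsetEnum (by norm_num) hd)

theorem stmt4_general (N d : ℕ) (hd : max 31 (6 * N - 17) ≤ d) :
    ∀ i, 3 ≤ i →
      (xN d N (i + 10) : ℤ) - (yT d (i + 10) : ℤ)
        = ((xN d N i : ℤ) - (yT d i : ℤ)) + ((d : ℤ) - 5 * N + 15) := by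
  intro i hi
  have hNd : N ≤ d := by omega
  simp only [xN, yT, nth_Sset_eq, nth_T5_eq (show 16 < d by omega)]
  rw [show i + 10 - 1 = i - 1 + 2 * 5 by omega, pmOneEnum_add_two_mul (by omega),
    tsetEnum_add_mul (by norm_num)]
  push_cast [Nat.cast_sub hNd]
  ring

theorem stmt4 (N d : ℕ) (hN : 2 ≤ N) (hd : max 31 (6 * N - 17) ≤ d) :
    ∀ i, 3 ≤ i →
      (xN d N (i + 10) : ℤ) - (yT d (i + 10) : ℤ)
        = ((xN d N i : ℤ) - (yT d i : ℤ)) + ((d : ℤ) - 5 * N + 15) :=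
  stmt4_general N d hd
end

section
/- Let N ≥ 2, d ≥ max{31, 9N−13, 13N−31}, n ≥ 7d+14, and let λ be a partition of n with all parts in S_d^N. For i ≥ 1 let p_i be the multiplicity in λ of the i-th smallest element x_i^N of S_d^N, and set α := Σ_{i≥3} (x_i^N − y_i) p_i, where y_i is the i-th smallest element of T_{5,d}. If p_1 + α < (N−2)p_2, then p_2 ≥ 8. -/
/-!
Put `m = d - N + 3`. Both sets have explicit increasing enumerations, and ten steps along them
add `5m` to `x_i` and `4d` to `y_i`; since `4d ≤ 5m`, the gap `x_i - y_i` for `i ≥ 3` is at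
least its minimum over `3 ≤ i ≤ 12`, namely `min {d - 2N - 1, d - 6N + 17} ≥ 7N - 14`.
If `p_2 ≤ 7`, the hypothesis then forces `p_i = 0` for `i ≥ 3` and `p_1 < 7N - 14`, so that
`n = p_1 + p_2 (m + 1) < 7d + 14`.
-/

theorem StrictMono.nth_range_eq {f : ℕ → ℕ} (hf : StrictMono f) (k : ℕ) :
    Nat.nth (· ∈ Set.range f) k = f k := by
  have := Nat.nth_comp_of_strictMono (p := (· ∈ Set.range f)) (n := k) hf (fun _ h => h)
    (fun hfin => absurd hfin (Set.infinite_range_of_injective hf.injective))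
  simpa using this.symm

theorem Multiset.sum_eq_count_mul_add_count_mul {s : Multiset ℕ} {a b : ℕ} (hab : a ≠ b)
    (h : ∀ x ∈ s, x = a ∨ x = b) : s.sum = s.count a * a + s.count b * b := by
  classical
  rw [Finset.sum_multiset_count_of_subset s {a, b}, Finset.sum_pair hab, smul_eq_mul, smul_eq_mul]
  intro x hx
  simpa using h x (Multiset.mem_toFinset.mp hx)

theorem Nat.Partition.eq_or_eq_of_count_eq_zero {n : ℕ} (l : n.Partition) {f : ℕ → ℕ}
    (hf : StrictMono f) (hf0 : f 0 ≠ 0) (hl : ∀ x ∈ l.parts, x ∈ Set.range f)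
    (hcount : ∀ k ∈ Finset.Ico 2 n, l.parts.count (f k) = 0) {x : ℕ} (hx : x ∈ l.parts) :
    x = f 0 ∨ x = f 1 := by
  obtain ⟨k, rfl⟩ := hl x hx
  have hkn : k + f 0 ≤ n := (hf.add_le_nat k 0).trans (Nat.Partition.le_of_mem_parts hx)
  by_contra! hne
  have hk : 2 ≤ k := by
    by_contra! hk
    interval_cases k <;> simp at hne
  exact Multiset.count_ne_zero.mpr hx (hcount k (Finset.mem_Ico.mpr ⟨hk, by omega⟩))

lemma eq_zero_and_lt_of_add_mul_lt {a b S : ℕ} {c : ℤ} (hc : 0 ≤ c)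
    (h : a + 7 * c * S < c * b) (hb : b ≤ 7) : S = 0 ∧ a < 7 * c := by
  have hcb : c * b ≤ 7 * c := by nlinarith
  have hS : S = 0 := by
    by_contra hS
    nlinarith [show (1 : ℤ) ≤ S by omega]
  subst hS
  exact ⟨rfl, by simpa using h.trans_le hcb⟩

/-- The increasing enumeration `1, m + 1, 2m - 1, 2m + 1, 3m - 1, …` of `Sset d N`
for `m = d - N + 3`. -/
def ssetEnum (m k : ℕ) : ℕ :=
  if k = 0 then 1 else (k + 1) / 2 * m + if k % 2 = 1 then 1 else m - 1

/-- The increasing enumeration `1, d + 2, d + 4, d + 8, d + 16, 2d + 1, …` of `T5 d`. -/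
def t5Enum (d k : ℕ) : ℕ :=
  k / 5 * (2 * d) + if k % 5 = 0 then 1 else d + 2 ^ (k % 5)

lemma ssetEnum_add_two_mul {k : ℕ} (hk : k ≠ 0) (m q : ℕ) :
    ssetEnum m (k + 2 * q) = ssetEnum m k + q * m := by
  simp only [ssetEnum, hk, show (k + 2 * q + 1) / 2 = (k + 1) / 2 + q by omega,
    show (k + 2 * q) % 2 = k % 2 by omega, show k + 2 * q ≠ 0 by omega, if_false]
  ring

lemma t5Enum_add_five_mul (d k q : ℕ) : t5Enum d (k + 5 * q) = t5Enum d k + q * (2 * d) := by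
  simp only [t5Enum, show (k + 5 * q) / 5 = k / 5 + q by omega,
    show (k + 5 * q) % 5 = k % 5 by omega]
  ring

lemma ssetEnum_strictMono {m : ℕ} (hm : 3 ≤ m) : StrictMono (ssetEnum m) := by
  refine strictMono_nat_of_lt_succ fun k => ?_
  rcases Nat.eq_zero_or_pos k with rfl | hk
  · simp [ssetEnum]
    omega
  · obtain ⟨q, r, hr1, hr2, rfl⟩ : ∃ q r, 1 ≤ r ∧ r ≤ 2 ∧ k = r + 2 * q :=
      ⟨(k - 1) / 2, (k - 1) % 2 + 1, by omega, by omega, by omega⟩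
    rw [add_right_comm, ssetEnum_add_two_mul (by omega), ssetEnum_add_two_mul (by omega),
      add_lt_add_iff_right]
    interval_cases r <;> simp [ssetEnum] <;> omega

lemma t5Enum_strictMono {d : ℕ} (hd : 16 < d) : StrictMono (t5Enum d) := by
  refine strictMono_nat_of_lt_succ fun k => ?_
  obtain ⟨q, r, hr, rfl⟩ : ∃ q r, r < 5 ∧ k = r + 5 * q :=
    ⟨k / 5, k % 5, k.mod_lt (by norm_num), by omega⟩
  rw [add_right_comm, t5Enum_add_five_mul, t5Enum_add_five_mul, add_lt_add_iff_right]
  interval_cases r <;> simp [t5Enum]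
  omega

lemma range_ssetEnum {m : ℕ} (hm : 3 ≤ m) :
    Set.range (ssetEnum m) = {x | x % m = 1 ∨ x % m = m - 1} \ {m - 1} := by
  ext x
  simp only [Set.mem_range, Set.mem_sdiff, Set.mem_ofPred_eq, Set.mem_singleton_iff]
  constructor
  · rintro ⟨k, rfl⟩
    rcases Nat.eq_zero_or_pos k with rfl | hk
    · simp [ssetEnum, Nat.mod_eq_of_lt (show 1 < m by omega)]
      omega
    · have hqm : m ≤ (k + 1) / 2 * m := Nat.le_mul_of_pos_left m (by omega)
      simp only [ssetEnum, hk.ne', if_false]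
      split_ifs
      · simp [Nat.mul_add_mod_of_lt (show 1 < m by omega)]
        omega
      · simp [Nat.mul_add_mod_of_lt (show m - 1 < m by omega)]
        omega
  · have hdiv := Nat.div_add_mod x m
    rintro ⟨hx | hx, hne⟩
    · rcases Nat.eq_zero_or_pos (x / m) with hq | hq
      · refine ⟨0, ?_⟩
        rw [hq] at hdiv
        simp [ssetEnum]
        omega
      · refine ⟨2 * (x / m) - 1, ?_⟩
        simp only [ssetEnum, show 2 * (x / m) - 1 ≠ 0 by omega,
          show (2 * (x / m) - 1) % 2 = 1 by omega,
          show (2 * (x / m) - 1 + 1) / 2 = x / m by omega, if_true, if_false]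
        rw [mul_comm] at hdiv
        omega
    · have hq : x / m ≠ 0 := by
        rintro hq
        rw [hq] at hdiv
        omega
      refine ⟨2 * (x / m), ?_⟩
      simp only [ssetEnum, show 2 * (x / m) ≠ 0 by omega, Nat.mul_mod_right,
        show (2 * (x / m) + 1) / 2 = x / m by omega, zero_ne_one, if_false]
      rw [mul_comm] at hdiv
      omega

lemma range_t5Enum {d : ℕ} (hd : 16 < d) : Set.range (t5Enum d) = T5 d := by
  have hlt : ∀ j < 5, d + 2 ^ j < 2 * d := fun j hj => by
    have : 2 ^ j ≤ 2 ^ 4 := Nat.pow_le_pow_right (by norm_num) (by omega)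
    omega
  ext y
  simp only [Set.mem_range, T5, Tset, Set.mem_ofPred_eq,
    Nat.mod_eq_of_lt (show 1 < 2 * d by omega)]
  constructor
  · rintro ⟨k, rfl⟩
    have hk5 := k.mod_lt (show 0 < 5 by norm_num)
    simp only [t5Enum]
    split_ifs with hk
    · left
      simp [Nat.mul_add_mod_of_lt (show 1 < 2 * d by omega)]
    · right
      refine ⟨k % 5, by omega, by omega, ?_⟩
      rw [Nat.mul_add_mod_of_lt (hlt _ hk5), Nat.mod_eq_of_lt (hlt _ hk5)]
  · have hdiv := Nat.div_add_mod y (2 * d)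
    rintro (hy | ⟨j, hj1, hj5, hy⟩)
    · refine ⟨5 * (y / (2 * d)), ?_⟩
      simp [t5Enum]
      rw [mul_comm]
      omega
    · rw [Nat.mod_eq_of_lt (hlt j (by omega))] at hy
      refine ⟨j + 5 * (y / (2 * d)), ?_⟩
      simp only [t5Enum, show (j + 5 * (y / (2 * d))) / 5 = y / (2 * d) by omega,
        show (j + 5 * (y / (2 * d))) % 5 = j by omega, show j ≠ 0 by omega, if_false]
      rw [mul_comm]
      omega

lemma Sset_eq_range_ssetEnum (d N : ℕ) : Sset d N = Set.range (ssetEnum (d - N + 3)) := by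
  rw [range_ssetEnum (by omega), Sset, Nat.mod_eq_of_lt (show 1 < d - N + 3 by omega),
    Nat.mod_eq_of_lt (show d - N + 2 < d - N + 3 by omega)]
  rfl

lemma xN_eq_ssetEnum (d N i : ℕ) : xN d N i = ssetEnum (d - N + 3) (i - 1) := by
  rw [xN, Sset_eq_range_ssetEnum, (ssetEnum_strictMono (by omega)).nth_range_eq]

lemma yT_eq_t5Enum {d : ℕ} (hd : 16 < d) (i : ℕ) : yT d i = t5Enum d (i - 1) := by
  rw [yT, ← range_t5Enum hd, (t5Enum_strictMono hd).nth_range_eq]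

lemma t5Enum_add_le_ssetEnum {N d k : ℕ} (hd : 16 < d) (h9 : 9 * N ≤ d + 13)
    (h13 : 13 * N ≤ d + 31) (hk : 2 ≤ k) :
    t5Enum d k + 7 * N ≤ ssetEnum (d - N + 3) k + 14 := by
  induction k using Nat.strong_induction_on with
  | _ k ih =>
    by_cases hk12 : k < 12
    · interval_cases k <;> simp [t5Enum, ssetEnum] <;> omega
    · obtain ⟨k, rfl⟩ : ∃ j, k = j + 10 := ⟨k - 10, by omega⟩
      have := ih k (by omega) (by omega)
      rw [show k + 10 = k + 5 * 2 by rfl, t5Enum_add_five_mul,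
        show k + 5 * 2 = k + 2 * 5 by rfl, ssetEnum_add_two_mul (by omega)]
      omega

lemma mul_sum_le_sum_xN_sub_yT_mul {N d n : ℕ} (hd : 16 < d) (h9 : 9 * N ≤ d + 13)
    (h13 : 13 * N ≤ d + 31) (c : ℕ → ℕ) :
    7 * ((N : ℤ) - 2) * (∑ i ∈ Finset.Icc 3 n, c i : ℕ)
      ≤ ∑ i ∈ Finset.Icc 3 n, ((xN d N i : ℤ) - yT d i) * c i := by
  push_cast
  rw [Finset.mul_sum]
  refine Finset.sum_le_sum fun i hi => mul_le_mul_of_nonneg_right ?_ (by positivity)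
  have := t5Enum_add_le_ssetEnum (k := i - 1) hd h9 h13 (by simp at hi; omega)
  rw [xN_eq_ssetEnum, yT_eq_t5Enum hd]
  omega

lemma eq_count_add_count_mul_of_sum_count_eq_zero {N d n : ℕ} (l : n.Partition)
    (hl : ∀ x ∈ l.parts, x ∈ Sset d N)
    (h0 : ∑ i ∈ Finset.Icc 3 n, l.parts.count (xN d N i) = 0) :
    n = l.parts.count (xN d N 1) + l.parts.count (xN d N 2) * (d - N + 4) := by
  have hx1 : xN d N 1 = 1 := by simp [xN_eq_ssetEnum, ssetEnum]
  have hx2 : xN d N 2 = d - N + 4 := by simp [xN_eq_ssetEnum, ssetEnum]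
  have hcount : ∀ k ∈ Finset.Ico 2 n, l.parts.count (ssetEnum (d - N + 3) k) = 0 := by
    intro k hk
    have := Finset.sum_eq_zero_iff.mp h0 (k + 1) (by simp at hk ⊢; omega)
    rwa [xN_eq_ssetEnum, Nat.add_sub_cancel] at this
  have hparts : ∀ x ∈ l.parts, x = 1 ∨ x = d - N + 4 := fun x hx => by
    simpa [ssetEnum] using l.eq_or_eq_of_count_eq_zero (ssetEnum_strictMono (by omega))
      (by simp [ssetEnum]) (fun y hy => Sset_eq_range_ssetEnum d N ▸ hl y hy) hcount hx
  have hsum := l.parts_sum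
  rw [Multiset.sum_eq_count_mul_add_count_mul (by omega) hparts, mul_one] at hsum
  rw [hx1, hx2, hsum]

theorem stmt5 (N d n : ℕ) (hN : 2 ≤ N)
    (hd : max 31 (max (9 * N - 13) (13 * N - 31)) ≤ d) (hn : 7 * d + 14 ≤ n)
    (l : n.Partition) (hl : ∀ x ∈ l.parts, x ∈ Sset d N)
    (hlt : (l.parts.count (xN d N 1) : ℤ)
        + ∑ i ∈ Finset.Icc 3 n,
            ((xN d N i : ℤ) - (yT d i : ℤ)) * (l.parts.count (xN d N i) : ℤ)
      < ((N : ℤ) - 2) * (l.parts.count (xN d N 2) : ℤ)) :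
    8 ≤ l.parts.count (xN d N 2) := by
  obtain ⟨hd16, h9, h13⟩ : 16 < d ∧ 9 * N ≤ d + 13 ∧ 13 * N ≤ d + 31 := by omega
  by_contra! hp2
  have hgap := mul_sum_le_sum_xN_sub_yT_mul (n := n) hd16 h9 h13 (l.parts.count <| xN d N ·)
  obtain ⟨hcount, hp1⟩ := eq_zero_and_lt_of_add_mul_lt (a := l.parts.count (xN d N 1))
    (show (0 : ℤ) ≤ N - 2 by omega) (by linarith) (Nat.lt_succ_iff.mp hp2)
  have hn' := eq_count_add_count_mul_of_sum_count_eq_zero l hl hcount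
  have : l.parts.count (xN d N 2) * (d - N + 4) ≤ 7 * (d - N + 4) :=
    Nat.mul_le_mul_right _ (by omega)
  omega
end

section
/- If N ≥ 2, d ≥ max{63, 46N−79}, and n = 2d−2N+4, then the number of partitions of n into parts congruent to ±1 mod (d−N+3) excluding the part d−N+2 is exactly 2, and q_d^{(1)}(d+2) ≥ 2; hence q_d^{(1)}(d+2) ≥ Q_{d−N}^{(1,−)}(2d−2N+4). -/
lemma aux_mem_char (m : ℕ) (hm : 5 ≤ m) (x : ℕ) (hx : x ∈ QminusSet 1 m)
    (hle : x ≤ 2 * m - 2) : x = 1 ∨ x = m + 1 := by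
  obtain ⟨hmod, hne⟩ := hx
  simp only [Set.mem_setOf_eq] at hmod
  simp only [Set.mem_singleton_iff] at hne
  have h1 : 1 % m = 1 := Nat.mod_eq_of_lt (by omega)
  have h2 : (m - 1) % m = m - 1 := Nat.mod_eq_of_lt (by omega)
  rw [h1, h2] at hmod
  have hdm := Nat.div_add_mod x m
  have hlt : x % m < m := Nat.mod_lt _ (by omega)
  have hq : x / m ≤ 1 := by
    by_contra h
    have h2' : 2 ≤ x / m := by omega
    have : m * 2 ≤ m * (x / m) := Nat.mul_le_mul_left m h2'
    omega
  have ht : x / m = 0 ∨ x / m = 1 := Nat.le_one_iff_eq_zero_or_eq_one.mp hq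
  rcases ht with ht | ht <;> rw [ht] at hdm <;> simp at hdm <;> rcases hmod with h | h <;> omega

lemma aux_parts_structure (m : ℕ) (hm : 5 ≤ m) (s : Multiset ℕ)
    (hsum : s.sum = 2 * m - 2) (hmem : ∀ x ∈ s, x = 1 ∨ x = m + 1) :
    s = Multiset.replicate (2 * m - 2) 1 ∨ s = (m + 1) ::ₘ Multiset.replicate (m - 3) 1 := by
  classical
  have hsplit := Multiset.filter_add_not (fun a => a = m + 1) s
  have hf1 : Multiset.filter (fun a => a = m + 1) s
      = Multiset.replicate (s.count (m + 1)) (m + 1) := by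
    rw [← Multiset.filter_eq]
    congr 1
    ext a
    exact eq_comm
  have hf2 : Multiset.filter (fun a => ¬ a = m + 1) s
      = Multiset.replicate (Multiset.card (Multiset.filter (fun a => ¬ a = m + 1) s)) 1 := by
    rw [Multiset.eq_replicate]
    refine ⟨rfl, fun b hb => ?_⟩
    rw [Multiset.mem_filter] at hb
    rcases hmem b hb.1 with h | h
    · exact h
    · exact absurd h hb.2
  set c := s.count (m + 1) with hc
  set k := Multiset.card (Multiset.filter (fun a => ¬ a = m + 1) s) with hk
  have hs : s = Multiset.replicate c (m + 1) + Multiset.replicate k 1 := by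
    rw [← hsplit, hf1, hf2]
  have hsum' : c * (m + 1) + k = 2 * m - 2 := by
    rw [hs] at hsum
    simp [Multiset.sum_replicate, smul_eq_mul] at hsum
    omega
  have hcle : c ≤ 1 := by
    by_contra h
    have : 2 * (m + 1) ≤ c * (m + 1) := Nat.mul_le_mul (by omega) (le_refl (m + 1))
    omega
  have hc01 : c = 0 ∨ c = 1 := by omega
  rcases hc01 with h | h <;> rw [h] at hs hsum'
  · left
    have hk' : k = 2 * m - 2 := by omega
    rw [hk'] at hs
    simpa using hs
  · right
    have hk' : k = m - 3 := by omega
    rw [hk'] at hs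
    simpa using hs

def partRep (m : ℕ) : (2 * m - 2).Partition :=
  ⟨Multiset.replicate (2 * m - 2) 1,
   fun {i} hi => by rw [Multiset.eq_of_mem_replicate hi]; norm_num,
   by simp⟩

def partBig (m : ℕ) (hm : 5 ≤ m) : (2 * m - 2).Partition :=
  ⟨(m + 1) ::ₘ Multiset.replicate (m - 3) 1,
   fun {i} hi => by
     rcases Multiset.mem_cons.mp hi with h | h
     · omega
     · rw [Multiset.eq_of_mem_replicate h]; norm_num,
   by simp; omega⟩

lemma partRep_parts (m : ℕ) : (partRep m).parts = Multiset.replicate (2 * m - 2) 1 := rfl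

lemma partBig_parts (m : ℕ) (hm : 5 ≤ m) :
    (partBig m hm).parts = (m + 1) ::ₘ Multiset.replicate (m - 3) 1 := rfl

lemma aux_qminus_card (m : ℕ) (hm : 5 ≤ m) :
    rho (QminusSet 1 m) (2 * m - 2) = 2 := by
  classical
  have hmem1 : (1 : ℕ) ∈ QminusSet 1 m := by
    constructor
    · left; rfl
    · simp only [Set.mem_singleton_iff]; omega
  have hmemM : (m + 1 : ℕ) ∈ QminusSet 1 m := by
    constructor
    · left
      exact Nat.add_mod_left m 1
    · simp only [Set.mem_singleton_iff]; omega
  rw [rho, Nat.card_eq_two_iff]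
  refine ⟨⟨partRep m, ?_⟩, ⟨partBig m hm, ?_⟩, ?_, ?_⟩
  · intro x hx
    rw [partRep_parts] at hx
    rw [Multiset.eq_of_mem_replicate hx]
    exact hmem1
  · intro x hx
    rw [partBig_parts] at hx
    rcases Multiset.mem_cons.mp hx with h | h
    · rw [h]; exact hmemM
    · rw [Multiset.eq_of_mem_replicate h]; exact hmem1
  · intro h
    have := congrArg (fun q => Multiset.card q.1.parts) h
    simp [partRep_parts, partBig_parts] at this
    omega
  · ext ⟨p, hp⟩
    simp only [Set.mem_insert_iff, Set.mem_singleton_iff, Set.mem_univ, iff_true]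
    have hmemp : ∀ x ∈ p.parts, x = 1 ∨ x = m + 1 := by
      intro x hx
      refine aux_mem_char m hm x (hp x hx) ?_
      calc x ≤ p.parts.sum := Multiset.le_sum_of_mem hx
        _ = 2 * m - 2 := p.parts_sum
    rcases aux_parts_structure m hm p.parts p.parts_sum hmemp with h | h
    · left
      apply Subtype.ext
      apply Nat.Partition.ext
      rw [h, partRep_parts]
    · right
      apply Subtype.ext
      apply Nat.Partition.ext
      rw [h, partBig_parts]

lemma aux_qpart (d : ℕ) (hd : 63 ≤ d) : 2 ≤ qpart 1 d (d + 2) := by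
  classical
  set P1 : (d + 2).Partition :=
    ⟨{d + 2}, fun {i} hi => by rw [Multiset.mem_singleton] at hi; omega, by simp⟩ with hP1
  set P2 : (d + 2).Partition :=
    ⟨{d + 1, 1}, fun {i} hi => by
      rw [Multiset.insert_eq_cons, Multiset.mem_cons, Multiset.mem_singleton] at hi
      omega, by simp⟩ with hP2
  have hc1 : (∀ x ∈ P1.parts, 1 ≤ x) ∧
      (∀ x ∈ P1.parts, P1.parts.count x ≤ 1) ∧
      (∀ x ∈ P1.parts, ∀ y ∈ P1.parts, x ≠ y → d ≤ max x y - min x y) := by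
    refine ⟨fun x hx => ?_, fun x hx => ?_, fun x hx y hy hxy => ?_⟩
    · simp [hP1] at hx; omega
    · simp [hP1] at hx; subst hx; simp [hP1, Multiset.count_singleton]
    · simp [hP1] at hx hy; omega
  have hc2 : (∀ x ∈ P2.parts, 1 ≤ x) ∧
      (∀ x ∈ P2.parts, P2.parts.count x ≤ 1) ∧
      (∀ x ∈ P2.parts, ∀ y ∈ P2.parts, x ≠ y → d ≤ max x y - min x y) := by
    refine ⟨fun x hx => ?_, fun x hx => ?_, fun x hx y hy hxy => ?_⟩
    · simp [hP2] at hx; omega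
    · simp [hP2] at hx
      rcases hx with h | h <;> subst h <;>
        simp [hP2, Multiset.insert_eq_cons, Multiset.count_cons, Multiset.count_singleton] <;>
        omega
    · simp [hP2] at hx hy
      rcases hx with h | h <;> rcases hy with h' | h' <;> subst h <;> subst h' <;>
        simp at hxy ⊢ <;> omega
  have hne : (⟨P1, hc1⟩ : {p : (d + 2).Partition //
      (∀ x ∈ p.parts, 1 ≤ x) ∧
      (∀ x ∈ p.parts, p.parts.count x ≤ 1) ∧
      (∀ x ∈ p.parts, ∀ y ∈ p.parts, x ≠ y → d ≤ max x y - min x y)}) ≠ ⟨P2, hc2⟩ := by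
    intro h
    have := congrArg (fun q : {p : (d + 2).Partition //
      (∀ x ∈ p.parts, 1 ≤ x) ∧
      (∀ x ∈ p.parts, p.parts.count x ≤ 1) ∧
      (∀ x ∈ p.parts, ∀ y ∈ p.parts, x ≠ y → d ≤ max x y - min x y)} =>
        Multiset.card q.1.parts) h
    simp [hP1, hP2] at this
  have hnt : Nontrivial {p : (d + 2).Partition //
      (∀ x ∈ p.parts, 1 ≤ x) ∧
      (∀ x ∈ p.parts, p.parts.count x ≤ 1) ∧
      (∀ x ∈ p.parts, ∀ y ∈ p.parts, x ≠ y → d ≤ max x y - min x y)} :=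
    ⟨⟨⟨P1, hc1⟩, ⟨P2, hc2⟩, hne⟩⟩
  have := Finite.one_lt_card (α := {p : (d + 2).Partition //
      (∀ x ∈ p.parts, 1 ≤ x) ∧
      (∀ x ∈ p.parts, p.parts.count x ≤ 1) ∧
      (∀ x ∈ p.parts, ∀ y ∈ p.parts, x ≠ y → d ≤ max x y - min x y)})
  rw [qpart]
  omega

theorem stmt6 (N d : ℕ) (hN : 2 ≤ N) (hd : max 63 (46 * N - 79) ≤ d) :
    Qminus 1 (d - N) (2 * d - 2 * N + 4) = 2 ∧
    2 ≤ qpart 1 d (d + 2) ∧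
    Qminus 1 (d - N) (2 * d - 2 * N + 4) ≤ qpart 1 d (d + 2) := by
  have hd63 : 63 ≤ d := le_trans (le_max_left _ _) hd
  have hdN : 46 * N - 79 ≤ d := le_trans (le_max_right _ _) hd
  have hNd : N + 60 ≤ d := by omega
  have hm5 : 5 ≤ d - N + 3 := by omega
  have hn : 2 * d - 2 * N + 4 = 2 * (d - N + 3) - 2 := by omega
  have h1 : Qminus 1 (d - N) (2 * d - 2 * N + 4) = 2 := by
    rw [Qminus, hn]
    exact aux_qminus_card (d - N + 3) hm5
  have h2 := aux_qpart d hd63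
  exact ⟨h1, h2, by rw [h1]; exact h2⟩
end

section
/- If N ≥ 2 and d ≥ max{63, 46N−79}, then for all d+2 ≤ n ≤ 7d+13, q_d^{(1)}(n) ≥ Q_{d−N}^{(1,−)}(n). -/
/-!
Sending a partition counted by `Qminus 1 (d - N) n` to the multiset of its parts other than `1`
is injective, the number of ones being determined by `n`. With `m = d - N + 3`, a part
`x = km ± 1` is encoded by the nearest integer `c` to `2x/m`; since `x ≥ (m - 1)⌊c/2⌋`, the codes
have total weight `∑ ⌊c/2⌋ ≤ W = ⌊n/(m - 1)⌋ ≤ 7`. Enumerating the code multisets of weight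
`≤ W` bounds their number by `19W - 17 ≤ (n - d)/2 + 1`, and that many partitions counted by
`qpart 1 d n` are `n` itself and `t + (n - t)` for `1 ≤ t ≤ (n - d)/2`.
-/

theorem Multiset.eq_of_map_eq_map_of_injOn {α β : Type*} {f : α → β} {S : Set α}
    (hf : S.InjOn f) {s t : Multiset α} (hs : ∀ x ∈ s, x ∈ S) (ht : ∀ x ∈ t, x ∈ S)
    (h : s.map f = t.map f) : s = t := by
  rcases isEmpty_or_nonempty α with hα | hα
  · exact Subsingleton.elim s t
  · have hinv : ∀ u : Multiset α, (∀ x ∈ u, x ∈ S) → (u.map f).map (Function.invFunOn f S) = u :=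
      fun u hu => by
        rw [Multiset.map_map]
        exact (Multiset.map_congr rfl fun x hx => hf.leftInvOn_invFunOn (hu x hx)).trans
          (Multiset.map_id' u)
    rw [← hinv s hs, h, hinv t ht]

theorem Nat.Partition.filter_ne_one_injective (n : ℕ) :
    Function.Injective fun p : n.Partition => p.parts.filter (· ≠ 1) := by
  have decomp : ∀ p : n.Partition,
      p.parts = Multiset.replicate (n - (p.parts.filter (· ≠ 1)).sum) 1 +
        p.parts.filter (· ≠ 1) := by
    intro p
    have hsplit := Multiset.filter_add_not (· = 1) p.parts
    rw [Multiset.filter_eq' p.parts 1] at hsplit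
    have hsum := congrArg Multiset.sum hsplit
    rw [Multiset.sum_add, Multiset.sum_replicate, smul_eq_mul, mul_one, p.parts_sum] at hsum
    rwa [← Nat.eq_sub_of_add_eq hsum, eq_comm]
  intro p q h
  have h' : p.parts.filter (· ≠ 1) = q.parts.filter (· ≠ 1) := h
  exact Nat.Partition.ext (by rw [decomp p, decomp q, h'])

theorem exists_eq_of_mem_QminusSet_one {m x : ℕ} (hm : 3 ≤ m) (hx : x ∈ QminusSet 1 m)
    (hx1 : x ≠ 1) : ∃ k, 1 ≤ k ∧ (x = k * m + 1 ∨ x + 1 = (k + 1) * m) := by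
  obtain ⟨hmod, hne⟩ := hx
  simp only [Set.mem_singleton_iff] at hne
  rw [Set.mem_ofPred_eq, Nat.mod_eq_of_lt (by omega : 1 < m),
    Nat.mod_eq_of_lt (by omega : m - 1 < m)] at hmod
  have hdiv := Nat.div_add_mod x m
  refine ⟨x / m, ?_, ?_⟩
  · rcases Nat.eq_zero_or_pos (x / m) with h0 | h0
    · rw [h0, mul_zero, zero_add] at hdiv
      omega
    · exact h0
  · rw [add_one_mul, mul_comm]
    omega

/-- The nearest integer to `2x/m`: for `x ≡ ±1 (mod m)` it records both the quotient and the
sign of the residue. -/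
def nearestHalfMultiple (m x : ℕ) : ℕ := (2 * x + m) / m

theorem nearestHalfMultiple_mul_add_one {m : ℕ} (hm : 3 ≤ m) (k : ℕ) :
    nearestHalfMultiple m (k * m + 1) = 2 * k + 1 := by
  rw [nearestHalfMultiple, show 2 * (k * m + 1) + m = 2 + (2 * k + 1) * m by ring,
    Nat.add_mul_div_right _ _ (by omega), Nat.div_eq_of_lt (by omega), zero_add]

theorem nearestHalfMultiple_of_add_one_eq {m x k : ℕ} (hm : 2 ≤ m) (hx : x + 1 = k * m) :
    nearestHalfMultiple m x = 2 * k := by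
  rw [nearestHalfMultiple, show 2 * x + m = (m - 2) + 2 * k * m by
    rw [mul_assoc, ← hx]; omega, Nat.add_mul_div_right _ _ (by omega),
    Nat.div_eq_of_lt (by omega), zero_add]

section nearestHalfMultiple

variable {m x : ℕ}

theorem nearestHalfMultiple_spec (hm : 3 ≤ m) (hx : x ∈ QminusSet 1 m \ {1}) :
    ∃ k, 1 ≤ k ∧ (x = k * m + 1 ∧ nearestHalfMultiple m x = 2 * k + 1 ∨
      x + 1 = (k + 1) * m ∧ nearestHalfMultiple m x = 2 * (k + 1)) := by
  obtain ⟨k, hk, hx | hx⟩ := exists_eq_of_mem_QminusSet_one hm hx.1 hx.2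
  · exact ⟨k, hk, Or.inl ⟨hx, hx ▸ nearestHalfMultiple_mul_add_one hm k⟩⟩
  · exact ⟨k, hk, Or.inr ⟨hx, nearestHalfMultiple_of_add_one_eq (by omega) hx⟩⟩

theorem three_le_nearestHalfMultiple (hm : 3 ≤ m) (hx : x ∈ QminusSet 1 m \ {1}) :
    3 ≤ nearestHalfMultiple m x := by
  obtain ⟨k, hk, ⟨-, h⟩ | ⟨-, h⟩⟩ := nearestHalfMultiple_spec hm hx <;> omega

theorem mul_nearestHalfMultiple_div_two_le (hm : 3 ≤ m) (hx : x ∈ QminusSet 1 m \ {1}) :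
    (m - 1) * (nearestHalfMultiple m x / 2) ≤ x := by
  obtain ⟨k, hk, ⟨hx, h⟩ | ⟨hx, h⟩⟩ := nearestHalfMultiple_spec hm hx
  · rw [h, show (2 * k + 1) / 2 = k by omega, hx, mul_comm]
    exact (Nat.mul_le_mul_left k (Nat.sub_le m 1)).trans (Nat.le_add_right _ 1)
  · rw [h, Nat.mul_div_cancel_left _ two_pos, Nat.sub_one_mul, mul_comm, ← hx]
    omega

theorem injOn_nearestHalfMultiple (hm : 3 ≤ m) :
    (QminusSet 1 m \ {1}).InjOn (nearestHalfMultiple m) := by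
  intro x hx y hy hxy
  obtain ⟨k, -, ⟨hx, hkx⟩ | ⟨hx, hkx⟩⟩ := nearestHalfMultiple_spec hm hx <;>
  obtain ⟨l, -, ⟨hy, hly⟩ | ⟨hy, hly⟩⟩ := nearestHalfMultiple_spec hm hy
  · rw [hx, hy, show k = l by omega]
  · omega
  · omega
  · have hkl : k = l := by omega
    subst hkl
    omega

end nearestHalfMultiple

def boundedMultisets {α : Type*} (wt : α → ℕ) : List α → ℕ → List (Multiset α)
  | [], _ => [0]
  | c :: cs, w => (List.range (w / wt c + 1)).flatMap fun k =>
      (boundedMultisets wt cs (w - k * wt c)).map (Multiset.replicate k c + ·)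

theorem mem_boundedMultisets {α : Type*} [DecidableEq α] {wt : α → ℕ} {cs : List α}
    (hwt : ∀ c ∈ cs, 0 < wt c) {s : Multiset α} (hs : ∀ x ∈ s, x ∈ cs) {w : ℕ}
    (hw : (s.map wt).sum ≤ w) : s ∈ boundedMultisets wt cs w := by
  induction cs generalizing s w with
  | nil =>
    rw [Multiset.eq_zero_of_forall_notMem fun x hx => List.not_mem_nil (hs x hx)]
    exact List.mem_singleton_self 0
  | cons c cs ih =>
    have hsplit : Multiset.replicate (s.count c) c + s.filter (· ≠ c) = s := by
      rw [← Multiset.filter_eq' s c]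
      exact Multiset.filter_add_not _ s
    have hweight : s.count c * wt c + ((s.filter (· ≠ c)).map wt).sum ≤ w := by
      rw [← hsplit, Multiset.map_add, Multiset.sum_add, Multiset.map_replicate,
        Multiset.sum_replicate, smul_eq_mul] at hw
      exact hw
    rw [boundedMultisets, List.mem_flatMap]
    refine ⟨s.count c, ?_, List.mem_map.2 ⟨s.filter (· ≠ c), ih (fun c' hc' => hwt c' (.tail _ hc'))
      (fun x hx => ?_) (Nat.le_sub_of_add_le' hweight), hsplit⟩⟩
    · rw [List.mem_range, Nat.lt_succ_iff, Nat.le_div_iff_mul_le (hwt c (.head _))]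
      omega
    · obtain ⟨hxs, hxc⟩ := Multiset.mem_filter.1 hx
      exact (List.mem_cons.1 (hs x hxs)).resolve_left hxc

/-- Code multisets of weight `∑ c / 2 ≤ W`: partitions of numbers `≤ W` in which each part `j ≥ 2`
comes in two colours (codes `2j`, `2j + 1`) and the part `1` in one (code `3`). -/
def codeMultisets (W : ℕ) : List (Multiset ℕ) :=
  boundedMultisets (· / 2) (List.range' 3 (2 * W - 1)) W

theorem mem_codeMultisets {W : ℕ} {s : Multiset ℕ} (hs : ∀ c ∈ s, 3 ≤ c)
    (hw : (s.map (· / 2)).sum ≤ W) : s ∈ codeMultisets W := by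
  refine mem_boundedMultisets (fun c hc => ?_) (fun c hc => ?_) hw
  · have := (List.mem_range'_1.1 hc).1
    omega
  · have hc2 : c / 2 ≤ W := (Multiset.le_sum_of_mem (Multiset.mem_map_of_mem _ hc)).trans hw
    have := hs c hc
    exact List.mem_range'_1.2 ⟨this, by omega⟩

theorem length_codeMultisets_le :
    ∀ W ∈ Finset.Icc 1 7, (codeMultisets W).length + 17 ≤ 19 * W := by
  decide +kernel

theorem map_nearestHalfMultiple_mem_codeMultisets {m n : ℕ} (hm : 3 ≤ m) {s : Multiset ℕ}
    (hs : ∀ x ∈ s, x ∈ QminusSet 1 m \ {1}) (hsum : s.sum ≤ n) :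
    s.map (nearestHalfMultiple m) ∈ codeMultisets (n / (m - 1)) := by
  refine mem_codeMultisets
    (Multiset.forall_mem_map_iff.2 fun x hx => three_le_nearestHalfMultiple hm (hs x hx)) ?_
  rw [Nat.le_div_iff_mul_le (by omega), mul_comm, ← Multiset.sum_map_mul_left, Multiset.map_map]
  calc (s.map fun x => (m - 1) * (nearestHalfMultiple m x / 2)).sum ≤ (s.map id).sum :=
        Multiset.sum_map_le_sum_map _ _ fun x hx => mul_nearestHalfMultiple_div_two_le hm (hs x hx)
    _ ≤ n := by rwa [Multiset.map_id]

theorem rho_QminusSet_one_le {m : ℕ} (hm : 3 ≤ m) (n : ℕ) :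
    rho (QminusSet 1 m) n ≤ (codeMultisets (n / (m - 1))).length := by
  classical
  set L := codeMultisets (n / (m - 1))
  have hmem : ∀ p : n.Partition, (∀ x ∈ p.parts, x ∈ QminusSet 1 m) →
      ∀ x ∈ p.parts.filter (· ≠ 1), x ∈ QminusSet 1 m \ {1} := fun p hp x hx =>
    ⟨hp x (Multiset.mem_of_mem_filter hx), (Multiset.mem_filter.1 hx).2⟩
  have hsum : ∀ p : n.Partition, (p.parts.filter (· ≠ 1)).sum ≤ n := fun p =>
    calc _ ≤ _ + (p.parts.filter fun x => ¬x ≠ 1).sum := Nat.le_add_right _ _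
      _ = n := by rw [← Multiset.sum_add, Multiset.filter_add_not, p.parts_sum]
  let F : {p : n.Partition // ∀ x ∈ p.parts, x ∈ QminusSet 1 m} → L.toFinset := fun p =>
    ⟨_, List.mem_toFinset.2 <|
      map_nearestHalfMultiple_mem_codeMultisets hm (hmem p.1 p.2) (hsum p.1)⟩
  have hF : Function.Injective F := by
    rintro ⟨p, hp⟩ ⟨q, hq⟩ h
    exact Subtype.ext <| Nat.Partition.filter_ne_one_injective n <|
      Multiset.eq_of_map_eq_map_of_injOn (injOn_nearestHalfMultiple hm) (hmem p hp) (hmem q hq)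
        (congrArg Subtype.val h)
  calc rho (QminusSet 1 m) n ≤ Nat.card L.toFinset := Nat.card_le_card_of_injective F hF
    _ = L.toFinset.card := Nat.card_eq_finsetCard _
    _ ≤ L.length := List.toFinset_card_le L

def Nat.Partition.pair {n t : ℕ} (ht : 0 < t) (htn : t < n) : n.Partition where
  parts := {t, n - t}
  parts_pos := by
    intro i hi
    simp only [Multiset.insert_eq_cons, Multiset.mem_cons, Multiset.mem_singleton] at hi
    omega
  parts_sum := by
    simp only [Multiset.insert_eq_cons, Multiset.sum_cons, Multiset.sum_singleton]
    omega

theorem sub_div_two_add_one_le_qpart_one {d n : ℕ} (hd : 1 ≤ d) (hn : 0 < n) :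
    (n - d) / 2 + 1 ≤ qpart 1 d n := by
  set K := (n - d) / 2
  let P : n.Partition → Prop := fun p => (∀ x ∈ p.parts, 1 ≤ x) ∧
    (∀ x ∈ p.parts, p.parts.count x ≤ 1) ∧
    (∀ x ∈ p.parts, ∀ y ∈ p.parts, x ≠ y → d ≤ max x y - min x y)
  have hsingle : P (Nat.Partition.indiscrete n) := by
    simp only [P, Nat.Partition.indiscrete_parts hn.ne', Multiset.mem_singleton]
    exact ⟨fun x hx => hx ▸ hn, fun x hx => by simp [hx],
      fun x hx y hy hxy => (hxy (hx.trans hy.symm)).elim⟩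
  have hpair : ∀ t (ht : 0 < t) (htK : t ≤ K), P (Nat.Partition.pair ht (by omega : t < n)) := by
    intro t ht htK
    simp only [P, Nat.Partition.pair, Multiset.insert_eq_cons, Multiset.mem_cons,
      Multiset.mem_singleton]
    refine ⟨fun x hx => by omega, fun x hx => ?_, fun x hx y hy hxy => by omega⟩
    simp only [Multiset.count_cons, Multiset.count_singleton]
    split_ifs <;> omega
  let f : Fin (K + 1) → {p : n.Partition // P p} := fun t =>
    if ht : (t : ℕ) = 0 then ⟨_, hsingle⟩
    else ⟨_, hpair t (Nat.pos_of_ne_zero ht) (Nat.lt_succ_iff.1 t.2)⟩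
  have hf : Function.Injective f := by
    intro t₁ t₂ h
    have hparts := congrArg (fun p => p.1.parts) h
    apply Fin.ext
    by_cases h₁ : (t₁ : ℕ) = 0 <;> by_cases h₂ : (t₂ : ℕ) = 0 <;>
      simp only [f, h₁, h₂, dite_true, dite_false, Nat.Partition.indiscrete_parts hn.ne',
        Nat.Partition.pair] at hparts
    · omega
    · simpa using congrArg Multiset.card hparts
    · simpa using congrArg Multiset.card hparts
    · have := t₁.2
      have := t₂.2
      have hmem : (t₁ : ℕ) ∈ ({(t₂ : ℕ), n - t₂} : Multiset ℕ) := hparts ▸ by simp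
      simp only [Multiset.insert_eq_cons, Multiset.mem_cons, Multiset.mem_singleton] at hmem
      omega
  calc K + 1 = Nat.card (Fin (K + 1)) := (Nat.card_fin _).symm
    _ ≤ qpart 1 d n := Nat.card_le_card_of_injective f hf

theorem stmt7_general (N d : ℕ) (hd : max 63 (46 * N - 79) ≤ d) :
    ∀ n, d + 2 ≤ n → n ≤ 7 * d + 13 → Qminus 1 (d - N) n ≤ qpart 1 d n := by
  intro n hn₁ hn₂
  have hd₁ : 63 ≤ d := le_of_max_le_left hd
  have hd₂ : 46 * N ≤ d + 79 := by have := le_of_max_le_right hd; omega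
  obtain ⟨W, hW⟩ : ∃ W, W = n / (d - N + 3 - 1) := ⟨_, rfl⟩
  have hW₁ : 1 ≤ W := hW ▸ (Nat.one_le_div_iff (by omega)).2 (by omega)
  have hW₇ : W < 8 := hW ▸ (Nat.div_lt_iff_lt_mul (by omega)).2 (by omega)
  have hWn : W * (d - N + 2) ≤ n := hW ▸ Nat.div_mul_le_self n _
  have hcount := length_codeMultisets_le W (Finset.mem_Icc.2 ⟨hW₁, by omega⟩)
  calc Qminus 1 (d - N) n ≤ (codeMultisets W).length := hW ▸ rho_QminusSet_one_le (by omega) n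
    _ ≤ (n - d) / 2 + 1 := by interval_cases W <;> omega
    _ ≤ qpart 1 d n := sub_div_two_add_one_le_qpart_one (by omega) (by omega)

theorem stmt7 (N d : ℕ) (hN : 2 ≤ N) (hd : max 63 (46 * N - 79) ≤ d) :
    ∀ n, d + 2 ≤ n → n ≤ 7 * d + 13 → Qminus 1 (d - N) n ≤ qpart 1 d n :=
  stmt7_general N d hd
end

section
/- Let a, d ≥ 1 and n ≥ d + 2a. Then q_d^{(a)}(n) ≥ q_{⌈d/a⌉}^{(1)}(⌈n/a⌉). -/
set_option maxHeartbeats 1000000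

namespace Stmt14Aux

/-- generic Finset-partition predicate -/
def FP (a d n : ℕ) (S : Finset ℕ) : Prop :=
  (∀ x ∈ S, a ≤ x) ∧ (∀ x ∈ S, ∀ y ∈ S, x ≠ y → d ≤ max x y - min x y) ∧ S.sum id = n

def validP (a d r : ℕ) (S : Finset ℕ) (v : ℕ) : Prop :=
  (∀ u ∈ S, u < v → d + r ≤ a * (v - u)) ∧ (r ≤ a * (v - 1) ∨ ∃ u ∈ S, u < v)

open Classical in
noncomputable def Vset (a d r : ℕ) (S : Finset ℕ) : Finset ℕ :=
  S.filter (fun v => validP a d r S v)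

lemma mem_Vset {a d r : ℕ} {S : Finset ℕ} {v : ℕ} :
    v ∈ Vset a d r S ↔ v ∈ S ∧ validP a d r S v := by
  classical
  simp [Vset]

def stair (e k : ℕ) : Finset ℕ := (Finset.range k).image (fun i => 1 + i * e)

lemma mem_stair {e k x : ℕ} : x ∈ stair e k ↔ ∃ i, i < k ∧ 1 + i * e = x := by
  simp [stair]

lemma stair_succ (e k : ℕ) : stair e (k+1) = insert (1 + k * e) (stair e k) := by
  simp [stair, Finset.range_add_one]

lemma stair_notMem {e : ℕ} (he : 1 ≤ e) (k : ℕ) : 1 + k * e ∉ stair e k := by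
  rw [mem_stair]; rintro ⟨i, hik, hi⟩
  have : i * e < k * e := Nat.mul_lt_mul_of_lt_of_le hik (le_refl e) (by omega)
  omega

lemma stair_sum_mono {e : ℕ} (he : 1 ≤ e) : StrictMono (fun k => (stair e k).sum id) := by
  apply strictMono_nat_of_lt_succ
  intro k
  rw [stair_succ, Finset.sum_insert (stair_notMem he k)]
  simp only [id_eq]
  omega

lemma stair_le {e k x : ℕ} (hx : x ∈ stair e (k+1)) : x ≤ 1 + k * e := by
  rw [mem_stair] at hx; obtain ⟨i, hik, hi⟩ := hx
  have : i * e ≤ k * e := Nat.mul_le_mul_right e (by omega)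
  omega

lemma stair_one (e : ℕ) : stair e 1 = {1} := by
  ext x
  rw [mem_stair, Finset.mem_singleton]
  constructor
  · rintro ⟨i, hi, rfl⟩
    have : i = 0 := by omega
    subst this; omega
  · rintro rfl; exact ⟨0, by omega, by omega⟩

lemma stair_two (e : ℕ) : stair e 2 = {1, 1 + e} := by
  ext x
  rw [mem_stair, Finset.mem_insert, Finset.mem_singleton]
  constructor
  · rintro ⟨i, hi, rfl⟩
    interval_cases i
    · left; omega
    · right; omega
  · rintro (rfl | rfl)
    · exact ⟨0, by omega, by omega⟩
    · exact ⟨1, by omega, by omega⟩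

lemma stair_three_sum {e : ℕ} (he : 1 ≤ e) : (stair e 3).sum id = 3 + 3*e := by
  have h3 : stair e 3 = {1, 1+e, 1+2*e} := by
    ext x
    rw [mem_stair]
    simp only [Finset.mem_insert, Finset.mem_singleton]
    constructor
    · rintro ⟨i, hi, rfl⟩
      interval_cases i
      · left; omega
      · right; left; omega
      · right; right; omega
    · rintro (rfl | rfl | rfl)
      · exact ⟨0, by omega, by omega⟩
      · exact ⟨1, by omega, by omega⟩
      · exact ⟨2, by omega, by omega⟩
  rw [h3]
  rw [Finset.sum_insert (by simp; omega), Finset.sum_insert (by simp; omega),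
      Finset.sum_singleton]
  simp only [id_eq]; omega

lemma gap_of_lt {S : Finset ℕ} {g x y : ℕ}
    (H : ∀ x ∈ S, ∀ y ∈ S, x ≠ y → g ≤ max x y - min x y)
    (hx : x ∈ S) (hy : y ∈ S) (hxy : x < y) : x + g ≤ y := by
  have h := H x hx y hy (by omega)
  rw [max_eq_right hxy.le, min_eq_left hxy.le] at h; omega

lemma gap_build {T : Finset ℕ} {g : ℕ}
    (H : ∀ x ∈ T, ∀ y ∈ T, x < y → x + g ≤ y) :
    ∀ x ∈ T, ∀ y ∈ T, x ≠ y → g ≤ max x y - min x y := by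
  intro x hx y hy hxy
  rcases Nat.lt_or_ge x y with h | h
  · have := H x hx y hy h; rw [max_eq_right h.le, min_eq_left h.le]; omega
  · have hyx : y < x := by omega
    have := H y hy x hx hyx; rw [max_eq_left hyx.le, min_eq_right hyx.le]; omega

lemma not_dvd_amr {a r v : ℕ} (hr1 : 1 ≤ r) (hra : r < a) (hv : 1 ≤ v) :
    ¬ a ∣ (a * v - r) := by
  rintro ⟨t, ht⟩
  have hav : a ≤ a * v := Nat.le_mul_of_pos_right a hv
  rcases Nat.lt_or_ge t v with h | h
  · have h1 : a * (t+1) ≤ a * v := Nat.mul_le_mul_left a (by omega)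
    have h2 : a*(t+1) = a*t + a := by ring
    omega
  · have : a * v ≤ a * t := Nat.mul_le_mul_left a h
    omega

lemma sum_image_mul {a : ℕ} (ha : 1 ≤ a) (S : Finset ℕ) :
    (S.image (a * ·)).sum id = a * S.sum id := by
  rw [Finset.sum_image (by intro x _ y _ h; exact Nat.eq_of_mul_eq_mul_left ha h)]
  simp [Finset.mul_sum]

lemma one_le_e {a d e : ℕ} (hd : 1 ≤ d) (he1 : d ≤ a*e) : 1 ≤ e := by
  rcases Nat.eq_zero_or_pos e with rfl | h
  · simp at he1; omega
  · exact h

lemma key_m4 {a d e m : ℕ} (he : 1 ≤ e) (he1 : d ≤ a*e) (hm : 3 + 3*e ≤ m) :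
    d + a ≤ a * (m - 4) := by
  have h1 : a*(3*e-1) ≤ a*(m-4) := Nat.mul_le_mul_left a (by omega)
  have h2 : a*(3*e-1) + a*1 = a*(3*e) := by rw [← Nat.mul_add]; congr 1; omega
  have h3 : a*(3*e) = 3*(a*e) := by ring
  have h4 : a*1 ≤ a*e := Nat.mul_le_mul_left a he
  have h5 : a ≤ a*1 := by omega
  omega


lemma special_eq_stair {a d e r : ℕ} (hd : 1 ≤ d) (he1 : d ≤ a*e)
    (hra : r < a) (S : Finset ℕ) :
    (∀ x ∈ S, 1 ≤ x) →
    (∀ x ∈ S, ∀ y ∈ S, x ≠ y → e ≤ max x y - min x y) →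
    Vset a d r S = ∅ → S = stair e S.card := by
  have he : 1 ≤ e := one_le_e hd he1
  induction S using Finset.strongInduction with
  | _ S ih =>
    intro h1 h2 hV
    rcases S.eq_empty_or_nonempty with rfl | hne
    · simp [stair]
    · set v := S.max' hne with hvdef
      have hvS : v ∈ S := S.max'_mem hne
      have hvmax : ∀ x ∈ S, x ≤ v := fun x hx => S.le_max' x hx
      have hvnot : ¬ validP a d r S v := by
        intro hval
        have : v ∈ Vset a d r S := mem_Vset.2 ⟨hvS, hval⟩
        simp [hV] at this
      set S' := S.erase v with hS'def
      have hsub : S' ⊂ S := Finset.erase_ssubset hvS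
      have h1' : ∀ x ∈ S', 1 ≤ x := fun x hx => h1 x (Finset.mem_of_mem_erase hx)
      have h2' : ∀ x ∈ S', ∀ y ∈ S', x ≠ y → e ≤ max x y - min x y :=
        fun x hx y hy => h2 x (Finset.mem_of_mem_erase hx) y (Finset.mem_of_mem_erase hy)
      have hlt : ∀ x ∈ S', x < v := by
        intro x hx
        have hxv : x ≠ v := Finset.ne_of_mem_erase hx
        have := hvmax x (Finset.mem_of_mem_erase hx); omega
      have hV' : Vset a d r S' = ∅ := by
        by_contra hc
        obtain ⟨u, hu⟩ := Finset.nonempty_iff_ne_empty.2 hc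
        rw [mem_Vset] at hu
        obtain ⟨huS', c1, c2⟩ := hu
        have huS : u ∈ S := Finset.mem_of_mem_erase huS'
        have huv : u < v := hlt u huS'
        have hval : validP a d r S u := by
          constructor
          · intro w hw hwu
            have hwv : w ≠ v := by omega
            exact c1 w (Finset.mem_erase.2 ⟨hwv, hw⟩) hwu
          · rcases c2 with h | ⟨w, hw, hwu⟩
            · exact Or.inl h
            · exact Or.inr ⟨w, Finset.mem_of_mem_erase hw, hwu⟩
        have : u ∈ Vset a d r S := mem_Vset.2 ⟨huS, hval⟩
        simp [hV] at this
      have hstair' := ih S' hsub h1' h2' hV'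
      rcases S'.eq_empty_or_nonempty with hS'e | hS'ne
      · -- S = {v}, v = 1
        have hSv : S = {v} := by
          apply Finset.eq_singleton_iff_unique_mem.2
          refine ⟨hvS, fun x hx => ?_⟩
          by_contra hxv
          have : x ∈ S' := Finset.mem_erase.2 ⟨hxv, hx⟩
          simp [hS'e] at this
        have hv1 : v = 1 := by
          have hnc2 : ¬ (r ≤ a * (v-1) ∨ ∃ u ∈ S, u < v) := by
            intro hc2
            apply hvnot
            refine ⟨fun u hu huv => ?_, hc2⟩
            rw [hSv, Finset.mem_singleton] at hu
            omega
          push_neg at hnc2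
          obtain ⟨hnr, -⟩ := hnc2
          rcases Nat.lt_or_ge v 2 with h' | h'
          · have := h1 v hvS; omega
          · exfalso
            have : a * 1 ≤ a * (v-1) := Nat.mul_le_mul_left a (by omega)
            omega
        rw [hSv, hv1]
        rw [Finset.card_singleton, stair_one]
      · set w := S'.max' hS'ne with hwdef
        have hwS' : w ∈ S' := S'.max'_mem hS'ne
        have hwmax : ∀ x ∈ S', x ≤ w := fun x hx => S'.le_max' x hx
        have hwS : w ∈ S := Finset.mem_of_mem_erase hwS'
        have hwv : w < v := hlt w hwS'
        have hc2 : r ≤ a * (v-1) ∨ ∃ u ∈ S, u < v := Or.inr ⟨w, hwS, hwv⟩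
        have hc1 : ¬ ∀ u ∈ S, u < v → d + r ≤ a * (v - u) := by
          intro hc1; exact hvnot ⟨hc1, hc2⟩
        push_neg at hc1
        obtain ⟨u, huS, huv, hular⟩ := hc1
        have hgap : u + e ≤ v := gap_of_lt h2 huS hvS huv
        have hveu : v = u + e := by
          by_contra hcc
          have h6 : a * (e+1) ≤ a * (v - u) := Nat.mul_le_mul_left a (by omega)
          have h7 : a * (e+1) = a*e + a := by ring
          omega
        have huw : u = w := by
          have h4 : u ≤ w := hwmax u (Finset.mem_erase.2 ⟨by omega, huS⟩)
          have h5 : w + e ≤ v := gap_of_lt h2 hwS hvS hwv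
          omega
        have hcard' : 1 ≤ S'.card := Finset.card_pos.2 hS'ne
        obtain ⟨j, hj⟩ : ∃ j, S'.card = j + 1 := ⟨S'.card - 1, by omega⟩
        have hwtop : w = 1 + j * e := by
          have hwmem : w ∈ stair e (j+1) := by rw [← hj, ← hstair']; exact hwS'
          have h6 : w ≤ 1 + j * e := stair_le hwmem
          have h7 : (1 + j*e) ∈ S' := by
            rw [hstair', hj]; exact mem_stair.2 ⟨j, by omega, rfl⟩
          have h8 := hwmax _ h7
          omega
        have hvtop : v = 1 + (j+1) * e := by rw [hveu, huw, hwtop]; ring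
        have hScard : S.card = j + 2 := by
          have hce := Finset.card_erase_of_mem hvS
          have hcpos := Finset.card_pos.2 hne
          rw [← hS'def] at hce
          omega
        have hSins : S = insert v S' := by
          rw [hS'def, Finset.insert_erase hvS]
        rw [hScard, hSins]
        have : stair e (j+2) = insert (1 + (j+1)*e) (stair e (j+1)) := stair_succ e (j+1)
        rw [this, ← hvtop, hstair', hj]

lemma special_pack {a d e r m n : ℕ} (hd : 1 ≤ d) (he1 : d ≤ a*e)
    (hra : r < a) (hmn : a*m = n + r) (hdn : d + 2*a ≤ n) (hm3 : 3 ≤ m)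
    {S : Finset ℕ} (h1 : ∀ x ∈ S, 1 ≤ x)
    (h2 : ∀ x ∈ S, ∀ y ∈ S, x ≠ y → e ≤ max x y - min x y)
    (h3 : S.sum id = m) (hV : Vset a d r S = ∅) :
    S = stair e S.card ∧ 1 ≤ r ∧ 3 + 3*e ≤ m := by
  have he : 1 ≤ e := one_le_e hd he1
  have hst := special_eq_stair hd he1 hra S h1 h2 hV
  have hr1 : 1 ≤ r := by
    by_contra hc
    have hr0 : r = 0 := by omega
    have hSne : S.Nonempty := by
      rcases S.eq_empty_or_nonempty with rfl | h
      · simp at h3; omega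
      · exact h
    have huS : S.min' hSne ∈ S := S.min'_mem hSne
    have hval : validP a d r S (S.min' hSne) := by
      constructor
      · intro w hw hwu
        have := S.min'_le w hw; omega
      · left; omega
    have : S.min' hSne ∈ Vset a d r S := mem_Vset.2 ⟨huS, hval⟩
    simp [hV] at this
  refine ⟨hst, hr1, ?_⟩
  have hcard : 3 ≤ S.card := by
    by_contra hc
    push_neg at hc
    interval_cases hSc : S.card
    · rw [Finset.card_eq_zero] at hSc; subst hSc; simp at h3; omega
    · rw [stair_one] at hst
      rw [hst] at h3; simp at h3; omega
    · rw [stair_two] at hst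
      have hmem : (1+e) ∈ S := by rw [hst]; simp
      have h1S : (1:ℕ) ∈ S := by rw [hst]; simp
      have hnotval : ¬ validP a d r S (1+e) := by
        intro hval
        have : (1+e) ∈ Vset a d r S := mem_Vset.2 ⟨hmem, hval⟩
        simp [hV] at this
      have hc2 : r ≤ a * (1+e-1) ∨ ∃ u ∈ S, u < 1+e := Or.inr ⟨1, h1S, by omega⟩
      have hnc1 : ¬ ∀ u ∈ S, u < 1+e → d + r ≤ a * (1+e - u) := by
        intro hcc; exact hnotval ⟨hcc, hc2⟩
      push_neg at hnc1
      obtain ⟨u, huS, hue, hult⟩ := hnc1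
      rw [hst, Finset.mem_insert, Finset.mem_singleton] at huS
      have hu1 : u = 1 := by omega
      subst hu1
      -- hult : a * (1+e-1) < d + r, i.e. a*e < d+r
      have hae : a * (1+e-1) = a * e := by congr 1; omega
      -- sum = 2 + e = m
      have hsum : m = 2 + e := by
        rw [hst] at h3
        rw [Finset.sum_insert (by simp; omega), Finset.sum_singleton] at h3
        simp only [id_eq] at h3; omega
      -- a*m = n + r ≥ d + 2a + r ⇒ a*e ≥ d + r
      have hexp : a * m = a * 2 + a * e := by
        rw [hsum, ← Nat.mul_add]
      have h2a : a * 2 = 2 * a := by ring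
      omega
  have hmono : (stair e 3).sum id ≤ (stair e S.card).sum id :=
    (stair_sum_mono he).monotone hcard
  rw [← hst, h3, stair_three_sum he] at hmono
  omega

lemma main_mem {a d e r m n : ℕ} (ha : 1 ≤ a) (hd : 1 ≤ d) (he1 : d ≤ a*e)
    (hra : r < a) (hmn : a * m = n + r)
    {S : Finset ℕ} {v : ℕ} (h1 : ∀ x ∈ S, 1 ≤ x)
    (h2 : ∀ x ∈ S, ∀ y ∈ S, x ≠ y → e ≤ max x y - min x y)
    (h3 : S.sum id = m)
    (hv : v ∈ Vset a d r S) :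
    FP a d n (insert (a*v - r) ((S.image (a * ·)).erase (a*v))) := by
  obtain ⟨hvS, c1, c2⟩ := mem_Vset.1 hv
  have hv1 : 1 ≤ v := h1 v hvS
  have hvm : v ≤ m := by
    have := Finset.single_le_sum (f := id) (fun i _ => Nat.zero_le (id i)) hvS
    simp only [id_eq] at this h3; omega
  have hav : a ≤ a*v := Nat.le_mul_of_pos_right a hv1
  have havm : a*v ≤ a*m := Nat.mul_le_mul_left a hvm
  have havmem : a*v ∈ S.image (a * ·) := Finset.mem_image_of_mem _ hvS
  -- generic facts about image elements
  have himg : ∀ x ∈ S.image (a * ·), ∃ u ∈ S, a * u = x := by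
    intro x hx; simpa using hx
  -- element lower bound for the special new part
  have hlow : a ≤ a*v - r := by
    rcases c2 with hcl | ⟨u, huS, huv⟩
    · have hsplit : a*(v-1) + a = a*v := by
        rw [show a*(v-1) + a = a*(v-1) + a*1 by ring, ← Nat.mul_add]
        congr 1; omega
      omega
    · have hk := c1 u huS huv
      have hsplit : a*v = a*(v-u) + a*u := by
        rw [← Nat.mul_add]; congr 1; omega
      have hau : a*1 ≤ a*u := Nat.mul_le_mul_left a (h1 u huS)
      have ha1 : a*1 = a := by ring
      omega
  refine ⟨?_, ?_, ?_⟩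
  · -- all elements ≥ a
    intro x hx
    rcases Finset.mem_insert.1 hx with rfl | hx'
    · exact hlow
    · obtain ⟨u, huS, rfl⟩ := himg x (Finset.mem_of_mem_erase hx')
      have hau : a*1 ≤ a*u := Nat.mul_le_mul_left a (h1 u huS)
      omega
  · -- gap condition
    apply gap_build
    intro x hx y hy hxy
    rcases Finset.mem_insert.1 hx with rfl | hx' <;>
      rcases Finset.mem_insert.1 hy with hy0 | hy'
    · omega
    · -- x = a*v - r, y = a*u
      obtain ⟨u, huS, rfl⟩ := himg y (Finset.mem_of_mem_erase hy')
      have hune : a*u ≠ a*v := Finset.ne_of_mem_erase hy'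
      have huv : u ≠ v := fun h => hune (by rw [h])
      rcases Nat.lt_or_ge u v with h | h
      · -- u < v: then a*u + d + r ≤ a*v, so y < x, contradiction
        have hk := c1 u huS h
        have hsplit : a*v = a*(v-u) + a*u := by
          rw [← Nat.mul_add]; congr 1; omega
        omega
      · have hvu : v < u := by omega
        have hg : v + e ≤ u := gap_of_lt h2 hvS huS hvu
        have hmul : a*(v+e) ≤ a*u := Nat.mul_le_mul_left a hg
        have hexp : a*(v+e) = a*v + a*e := by ring
        omega
    · -- x = a*u, y = a*v - r
      obtain ⟨u, huS, rfl⟩ := himg x (Finset.mem_of_mem_erase hx')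
      have hune : a*u ≠ a*v := Finset.ne_of_mem_erase hx'
      have huv : u ≠ v := fun h => hune (by rw [h])
      subst hy0
      rcases Nat.lt_or_ge u v with h | h
      · have hk := c1 u huS h
        have hsplit : a*v = a*(v-u) + a*u := by
          rw [← Nat.mul_add]; congr 1; omega
        omega
      · have hvu : v < u := by omega
        have hg : v + e ≤ u := gap_of_lt h2 hvS huS hvu
        have hmul : a*(v+e) ≤ a*u := Nat.mul_le_mul_left a hg
        have hexp : a*(v+e) = a*v + a*e := by ring
        omega
    · -- both images
      obtain ⟨u, huS, rfl⟩ := himg x (Finset.mem_of_mem_erase hx')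
      obtain ⟨u', hu'S, rfl⟩ := himg y (Finset.mem_of_mem_erase hy')
      have huu : u < u' := Nat.lt_of_mul_lt_mul_left hxy
      have hg : u + e ≤ u' := gap_of_lt h2 huS hu'S huu
      have hmul : a*(u+e) ≤ a*u' := Nat.mul_le_mul_left a hg
      have hexp : a*(u+e) = a*u + a*e := by ring
      omega
  · -- sum
    rcases Nat.eq_zero_or_pos r with hr0 | hr1
    · subst hr0
      rw [Nat.sub_zero, Finset.insert_erase havmem, sum_image_mul ha, h3]
      omega
    · have hnotmem : a*v - r ∉ (S.image (a * ·)).erase (a*v) := by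
        intro hmem
        obtain ⟨u, huS, hu⟩ := himg _ (Finset.mem_of_mem_erase hmem)
        exact not_dvd_amr hr1 hra hv1 ⟨u, hu.symm⟩
      rw [Finset.sum_insert hnotmem]
      have hse := Finset.add_sum_erase (S.image (a * ·)) id havmem
      rw [sum_image_mul ha, h3] at hse
      simp only [id_eq] at hse ⊢
      omega

lemma special_mem {a d e r m n : ℕ} (ha : 1 ≤ a) (hd : 1 ≤ d) (he1 : d ≤ a*e)
    (hra : r < a) (hr1 : 1 ≤ r) (hmn : a*m = n + r) (hm : 3 + 3*e ≤ m) :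
    FP a d n (insert (a*(m-2)) {2*a - r}) := by
  have he : 1 ≤ e := one_le_e hd he1
  have hm6 : 6 ≤ m := by omega
  have key : d + a ≤ a*(m-4) := key_m4 he he1 hm
  have hsplit : a*(m-2) = a*(m-4) + 2*a := by
    rw [show m-2 = (m-4)+2 by omega, Nat.mul_add]; ring
  have hmm : a * m = a*(m-2) + 2*a := by
    have h9 : m - 2 + 2 = m := by omega
    calc a*m = a*(m-2+2) := by rw [h9]
    _ = a*(m-2) + a*2 := by rw [Nat.mul_add]
    _ = a*(m-2) + 2*a := by ring
  have hdistinct : 2*a - r < a*(m-2) := by omega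
  refine ⟨?_, ?_, ?_⟩
  · intro x hx
    rcases Finset.mem_insert.1 hx with rfl | hx'
    · omega
    · rw [Finset.mem_singleton] at hx'; omega
  · apply gap_build
    intro x hx y hy hxy
    rcases Finset.mem_insert.1 hx with rfl | hx' <;>
      rcases Finset.mem_insert.1 hy with hy' | hy'
    · omega
    · rw [Finset.mem_singleton] at hy'; omega
    · rw [Finset.mem_singleton] at hx'; subst hx'; subst hy'; omega
    · rw [Finset.mem_singleton] at hx' hy'; omega
  · rw [Finset.sum_insert (by rw [Finset.mem_singleton]; omega), Finset.sum_singleton]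
    simp only [id_eq]
    omega

noncomputable def fmap (a d r m : ℕ) (S : Finset ℕ) : Finset ℕ :=
  if h : (Vset a d r S).Nonempty then
    insert (a * (Vset a d r S).max' h - r)
      ((S.image (a * ·)).erase (a * (Vset a d r S).max' h))
  else insert (a * (m - 2)) {2 * a - r}

lemma recover {a r : ℕ} (ha : 1 ≤ a) (hr1 : 1 ≤ r) (hra : r < a)
    {S₁ S₂ : Finset ℕ} {v₁ v₂ : ℕ}
    (h1 : ∀ x ∈ S₁, 1 ≤ x) (h1' : ∀ x ∈ S₂, 1 ≤ x)
    (hv₁ : v₁ ∈ S₁) (hv₂ : v₂ ∈ S₂)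
    (heq : insert (a*v₁ - r) ((S₁.image (a * ·)).erase (a*v₁))
         = insert (a*v₂ - r) ((S₂.image (a * ·)).erase (a*v₂))) :
    S₁ = S₂ := by
  have hv11 := h1 v₁ hv₁
  have hv21 := h1' v₂ hv₂
  have hd1 : ¬ a ∣ (a*v₁ - r) := not_dvd_amr hr1 hra hv11
  have hd2 : ¬ a ∣ (a*v₂ - r) := not_dvd_amr hr1 hra hv21
  have himg1 : ∀ x ∈ S₁.image (a * ·), ∃ u ∈ S₁, a * u = x := by
    intro x hx; simpa using hx
  have himg2 : ∀ x ∈ S₂.image (a * ·), ∃ u ∈ S₂, a * u = x := by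
    intro x hx; simpa using hx
  have hx : a*v₁ - r ∈ insert (a*v₂ - r) ((S₂.image (a * ·)).erase (a*v₂)) := by
    rw [← heq]; exact Finset.mem_insert_self _ _
  have hxy : a*v₁ - r = a*v₂ - r := by
    rcases Finset.mem_insert.1 hx with h | h
    · exact h
    · exfalso
      obtain ⟨u, _, hu⟩ := himg2 _ (Finset.mem_of_mem_erase h)
      exact hd1 ⟨u, hu.symm⟩
  have hv12 : v₁ = v₂ := by
    have ha1 : a ≤ a*v₁ := Nat.le_mul_of_pos_right a hv11
    have ha2 : a ≤ a*v₂ := Nat.le_mul_of_pos_right a hv21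
    have : a*v₁ = a*v₂ := by omega
    exact Nat.eq_of_mul_eq_mul_left ha this
  subst hv12
  have hnm1 : a*v₁ - r ∉ (S₁.image (a * ·)).erase (a*v₁) := by
    intro h
    obtain ⟨u, _, hu⟩ := himg1 _ (Finset.mem_of_mem_erase h)
    exact hd1 ⟨u, hu.symm⟩
  have hnm2 : a*v₁ - r ∉ (S₂.image (a * ·)).erase (a*v₁) := by
    intro h
    obtain ⟨u, _, hu⟩ := himg2 _ (Finset.mem_of_mem_erase h)
    exact hd1 ⟨u, hu.symm⟩
  have herase : (S₁.image (a * ·)).erase (a*v₁) = (S₂.image (a * ·)).erase (a*v₁) := by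
    ext y
    constructor <;> intro hy
    · have hmem : y ∈ insert (a*v₁ - r) ((S₂.image (a * ·)).erase (a*v₁)) := by
        rw [← heq]; exact Finset.mem_insert_of_mem hy
      rcases Finset.mem_insert.1 hmem with rfl | h
      · exact absurd hy hnm1
      · exact h
    · have hmem : y ∈ insert (a*v₁ - r) ((S₁.image (a * ·)).erase (a*v₁)) := by
        rw [heq]; exact Finset.mem_insert_of_mem hy
      rcases Finset.mem_insert.1 hmem with rfl | h
      · exact absurd hy hnm2
      · exact h
  have himg : S₁.image (a * ·) = S₂.image (a * ·) := by
    have e1 := Finset.insert_erase (Finset.mem_image_of_mem (a * ·) hv₁)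
    have e2 := Finset.insert_erase (Finset.mem_image_of_mem (a * ·) hv₂)
    rw [← e1, ← e2, herase]
  exact Finset.image_injective (fun x y h => Nat.eq_of_mul_eq_mul_left ha h) himg

lemma main_ne_special {a d e r m n : ℕ} (ha : 1 ≤ a) (hd : 1 ≤ d) (he1 : d ≤ a*e)
    (hra : r < a) (hmn : a*m = n + r) (hdn : d + 2*a ≤ n) (hm3 : 3 ≤ m)
    {S₁ S₂ : Finset ℕ}
    (h11 : ∀ x ∈ S₁, 1 ≤ x)
    (h21 : ∀ x ∈ S₂, 1 ≤ x)
    (h22 : ∀ x ∈ S₂, ∀ y ∈ S₂, x ≠ y → e ≤ max x y - min x y)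
    (h23 : S₂.sum id = m)
    (hV₁ : (Vset a d r S₁).Nonempty) (hV₂ : Vset a d r S₂ = ∅)
    (heq : insert (a * (Vset a d r S₁).max' hV₁ - r)
        ((S₁.image (a * ·)).erase (a * (Vset a d r S₁).max' hV₁))
      = insert (a*(m-2)) {2*a - r}) : False := by
  obtain ⟨-, hr1, hm33⟩ := special_pack hd he1 hra hmn hdn hm3 h21 h22 h23 hV₂
  have he : 1 ≤ e := one_le_e hd he1
  have hm6 : 6 ≤ m := by omega
  set v₁ := (Vset a d r S₁).max' hV₁ with hv₁def
  have hv₁V : v₁ ∈ Vset a d r S₁ := (Vset a d r S₁).max'_mem hV₁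
  have hv₁S : v₁ ∈ S₁ := (mem_Vset.1 hv₁V).1
  have hv11 : 1 ≤ v₁ := h11 v₁ hv₁S
  have hd1 : ¬ a ∣ (a*v₁ - r) := not_dvd_amr hr1 hra hv11
  have hd2' : ¬ a ∣ (2*a - r) := by
    have : ¬ a ∣ (a*2 - r) := not_dvd_amr hr1 hra (by omega)
    rw [show a*2 = 2*a by ring] at this; exact this
  have himg1 : ∀ x ∈ S₁.image (a * ·), ∃ u ∈ S₁, a * u = x := by
    intro x hx; simpa using hx
  -- a*v₁ - r = 2*a - r, hence v₁ = 2
  have hmem0 : a*v₁ - r ∈ insert (a*(m-2)) ({2*a - r} : Finset ℕ) := by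
    rw [← heq]; exact Finset.mem_insert_self _ _
  have hv₁2 : v₁ = 2 := by
    rcases Finset.mem_insert.1 hmem0 with h | h
    · exact absurd ⟨m-2, h⟩ hd1
    · rw [Finset.mem_singleton] at h
      have ha1 : a ≤ a*v₁ := Nat.le_mul_of_pos_right a hv11
      have : a*v₁ = 2*a := by omega
      have h2 : a*v₁ = a*2 := by omega
      exact Nat.eq_of_mul_eq_mul_left ha h2
  -- identify S₁ = {2, m-2}
  have hE : (S₁.image (a * ·)).erase (a*v₁) = {a*(m-2)} := by
    have hkey : d + a ≤ a*(m-4) := key_m4 he he1 hm33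
    have hnm : (2*a - r) ∉ (S₁.image (a * ·)).erase (a*v₁) := by
      intro h
      obtain ⟨u, _, hu⟩ := himg1 _ (Finset.mem_of_mem_erase h)
      exact hd2' ⟨u, hu.symm⟩
    ext y
    rw [Finset.mem_singleton]
    constructor
    · intro hy
      have hmem : y ∈ insert (a*(m-2)) ({2*a - r} : Finset ℕ) := by
        rw [← heq]; exact Finset.mem_insert_of_mem hy
      rcases Finset.mem_insert.1 hmem with h | h
      · exact h
      · rw [Finset.mem_singleton] at h; subst h; exact absurd hy hnm
    · rintro rfl
      have hmem : a*(m-2) ∈ insert (a*v₁ - r)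
          ((S₁.image (a * ·)).erase (a*v₁)) := by
        rw [heq]; exact Finset.mem_insert_self _ _
      rcases Finset.mem_insert.1 hmem with h | h
      · exact absurd ⟨m-2, h.symm⟩ hd1
      · exact h
  have hS₁ : S₁ = {2, m-2} := by
    have himgeq : S₁.image (a * ·) = {a*2, a*(m-2)} := by
      have e1 := Finset.insert_erase (Finset.mem_image_of_mem (a * ·) hv₁S)
      rw [hE, hv₁2] at e1
      rw [← e1]
    have h2img : ({a*2, a*(m-2)} : Finset ℕ) = ({2, m-2} : Finset ℕ).image (a * ·) := by
      rw [Finset.image_insert, Finset.image_singleton]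
    rw [h2img] at himgeq
    exact Finset.image_injective (fun x y h => Nat.eq_of_mul_eq_mul_left ha h) himgeq
  -- but then m-2 is a valid choice in S₁, contradicting maximality of v₁ = 2
  have hkey : d + a ≤ a*(m-4) := key_m4 he he1 hm33
  have hval : validP a d r S₁ (m-2) := by
    constructor
    · intro u hu huv
      rw [hS₁, Finset.mem_insert, Finset.mem_singleton] at hu
      have hu2 : u = 2 := by omega
      subst hu2
      have : m - 2 - 2 = m - 4 := by omega
      rw [this]
      omega
    · right
      exact ⟨2, by rw [hS₁]; simp, by omega⟩
  have hmemS : m - 2 ∈ S₁ := by rw [hS₁]; simp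
  have : m - 2 ∈ Vset a d r S₁ := mem_Vset.2 ⟨hmemS, hval⟩
  have := (Vset a d r S₁).le_max' _ this
  rw [← hv₁def, hv₁2] at this
  omega

lemma fmap_mem {a d e r m n : ℕ} (ha : 1 ≤ a) (hd : 1 ≤ d) (he1 : d ≤ a*e)
    (hra : r < a) (hmn : a*m = n + r) (hdn : d + 2*a ≤ n) (hm3 : 3 ≤ m)
    {S : Finset ℕ} (hS : FP 1 e m S) : FP a d n (fmap a d r m S) := by
  obtain ⟨h1, h2, h3⟩ := hS
  unfold fmap
  split_ifs with h
  · exact main_mem ha hd he1 hra hmn h1 h2 h3 ((Vset a d r S).max'_mem h)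
  · obtain ⟨-, hr1, hm33⟩ := special_pack hd he1 hra hmn hdn hm3 h1 h2 h3
      (Finset.not_nonempty_iff_eq_empty.1 h)
    exact special_mem ha hd he1 hra hr1 hmn hm33

lemma fmap_inj {a d e r m n : ℕ} (ha : 1 ≤ a) (hd : 1 ≤ d) (he1 : d ≤ a*e)
    (hra : r < a) (hmn : a*m = n + r) (hdn : d + 2*a ≤ n) (hm3 : 3 ≤ m)
    {S₁ S₂ : Finset ℕ} (hS₁ : FP 1 e m S₁) (hS₂ : FP 1 e m S₂)
    (heq : fmap a d r m S₁ = fmap a d r m S₂) : S₁ = S₂ := by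
  obtain ⟨h11, h12, h13⟩ := hS₁
  obtain ⟨h21, h22, h23⟩ := hS₂
  have he : 1 ≤ e := one_le_e hd he1
  unfold fmap at heq
  split_ifs at heq with hV₁ hV₂ hV₂
  · -- both main
    rcases Nat.eq_zero_or_pos r with hr0 | hr1
    · subst hr0
      have hm1 : a * (Vset a d 0 S₁).max' hV₁ ∈ S₁.image (a * ·) :=
        Finset.mem_image_of_mem _ (mem_Vset.1 ((Vset a d 0 S₁).max'_mem hV₁)).1
      have hm2 : a * (Vset a d 0 S₂).max' hV₂ ∈ S₂.image (a * ·) :=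
        Finset.mem_image_of_mem _ (mem_Vset.1 ((Vset a d 0 S₂).max'_mem hV₂)).1
      rw [Nat.sub_zero, Nat.sub_zero, Finset.insert_erase hm1,
        Finset.insert_erase hm2] at heq
      exact Finset.image_injective (fun x y h => Nat.eq_of_mul_eq_mul_left ha h) heq
    · exact recover ha hr1 hra h11 h21
        (mem_Vset.1 ((Vset a d r S₁).max'_mem hV₁)).1
        (mem_Vset.1 ((Vset a d r S₂).max'_mem hV₂)).1 heq
  · exact absurd heq (by
      intro h
      exact main_ne_special ha hd he1 hra hmn hdn hm3 h11 h21 h22 h23 hV₁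
        (Finset.not_nonempty_iff_eq_empty.1 hV₂) h)
  · exact absurd heq.symm (by
      intro h
      exact main_ne_special ha hd he1 hra hmn hdn hm3 h21 h11 h12 h13 hV₂
        (Finset.not_nonempty_iff_eq_empty.1 hV₁) h)
  · -- both special
    obtain ⟨hst₁, hr1, -⟩ := special_pack hd he1 hra hmn hdn hm3 h11 h12 h13
      (Finset.not_nonempty_iff_eq_empty.1 hV₁)
    obtain ⟨hst₂, -, -⟩ := special_pack hd he1 hra hmn hdn hm3 h21 h22 h23
      (Finset.not_nonempty_iff_eq_empty.1 hV₂)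
    have hsum : (stair e S₁.card).sum id = (stair e S₂.card).sum id := by
      rw [← hst₁, ← hst₂, h13, h23]
    have := (stair_sum_mono he).injective hsum
    rw [hst₁, hst₂, this]

noncomputable def partEquiv (a' d' n' : ℕ) (ha' : 1 ≤ a') :
    {p : Nat.Partition n' // (∀ x ∈ p.parts, a' ≤ x) ∧ (∀ x ∈ p.parts, p.parts.count x ≤ 1) ∧
      (∀ x ∈ p.parts, ∀ y ∈ p.parts, x ≠ y → d' ≤ max x y - min x y)} ≃
    {S : Finset ℕ // FP a' d' n' S} where
  toFun p :=
    ⟨⟨p.1.parts, Multiset.nodup_iff_count_le_one.2 (fun x => by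
        by_cases hx : x ∈ p.1.parts
        · exact p.2.2.1 x hx
        · rw [Multiset.count_eq_zero_of_notMem hx]; omega)⟩,
      p.2.1, p.2.2.2, by
        show (Multiset.map id p.1.parts).sum = n'
        rw [Multiset.map_id]; exact p.1.parts_sum⟩
  invFun S :=
    ⟨⟨S.1.1, fun {i} hi => lt_of_lt_of_le Nat.one_pos (le_trans ha' (S.2.1 i hi)),
        by
          have := S.2.2.2
          show Multiset.sum S.1.1 = n'
          rw [← Multiset.map_id S.1.1]; exact this⟩,
      S.2.1, fun x _ => Multiset.nodup_iff_count_le_one.1 S.1.2 x, S.2.2.1⟩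
  left_inv p := rfl
  right_inv S := rfl

end Stmt14Aux


open Stmt14Aux in
theorem stmt14 (a d n : ℕ) (ha : 1 ≤ a) (hd : 1 ≤ d) (hn : d + 2 * a ≤ n) :
    qpart 1 ((d + a - 1) / a) ((n + a - 1) / a) ≤ qpart a d n := by
  classical
  set e := (d + a - 1) / a with hedef
  set m := (n + a - 1) / a with hmdef
  have he1 : d ≤ a * e := by
    rw [hedef]
    have h := Nat.div_add_mod (d + a - 1) a
    have h2 : (d + a - 1) % a < a := Nat.mod_lt _ (by omega)
    omega
  have hm1 : n ≤ a * m := by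
    rw [hmdef]
    have h := Nat.div_add_mod (n + a - 1) a
    have h2 : (n + a - 1) % a < a := Nat.mod_lt _ (by omega)
    omega
  have hm2 : a * m ≤ n + a - 1 := by
    rw [hmdef, Nat.mul_comm]; exact Nat.div_mul_le_self _ _
  set r := a * m - n with hrdef
  have hmn : a * m = n + r := by omega
  have hra : r < a := by omega
  have hm3 : 3 ≤ m := by
    by_contra hc
    push_neg at hc
    have : a * m ≤ a * 2 := Nat.mul_le_mul_left a (by omega)
    have h2 : a * 2 = 2 * a := by ring
    omega
  unfold qpart
  rw [Nat.card_congr (partEquiv 1 e m le_rfl), Nat.card_congr (partEquiv a d n ha)]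
  haveI : Finite {S : Finset ℕ // FP a d n S} :=
    Finite.of_equiv _ (partEquiv a d n ha)
  exact Nat.card_le_card_of_injective
    (fun S => ⟨fmap a d r m S.1, fmap_mem ha hd he1 hra hmn hn hm3 S.2⟩)
    (fun S₁ S₂ h =>
      Subtype.ext (fmap_inj ha hd he1 hra hmn hn hm3 S₁.2 S₂.2
        (congrArg Subtype.val h)))
end

section
/- Let a ≥ 1 and let S = {x_i}, T = {y_i} be strictly increasing sequences of positive integers with y_1 = a, a | y_i for all i, and x_i ≥ y_i for all i ≥ 1. Then for all n ≥ 1, ρ(T; n + n̂_a) ≥ ρ(S; n), where n̂_a is the least nonnegative integer with a | (n + n̂_a). -/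
theorem stmt15 (a : ℕ) (ha : 1 ≤ a) (x y : ℕ → ℕ)
    (hx : StrictMono x) (hy : StrictMono y) (hxpos : ∀ i, 0 < x i)
    (hy1 : y 0 = a) (hdvd : ∀ i, a ∣ y i) (hxy : ∀ i, y i ≤ x i) :
    ∀ n, 1 ≤ n → rho (Set.range x) n ≤ rho (Set.range y) (n + (a - n % a) % a) := by
  classical
  intro n hn
  set pad := (a - n % a) % a with hpad
  have hxinj := hx.injective
  have hyinj := hy.injective
  set f : ℕ → ℕ := fun z => y (Function.invFun x z) with hfdef
  set g : ℕ → ℕ := fun z => x (Function.invFun y z) with hgdef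
  have hfx : ∀ i, f (x i) = y i := fun i => by
    simp only [hfdef, Function.leftInverse_invFun hxinj i]
  have hgy : ∀ i, g (y i) = x i := fun i => by
    simp only [hgdef, Function.leftInverse_invFun hyinj i]
  have hma : a ∣ n + pad := by
    have h1 : n % a < a := Nat.mod_lt n ha
    rcases Nat.eq_zero_or_pos (n % a) with h | h
    · have hp0 : pad = 0 := by simp [hpad, h]
      rw [hp0, Nat.add_zero]
      exact Nat.dvd_of_mod_eq_zero h
    · have h2 : pad = a - n % a := Nat.mod_eq_of_lt (by omega)
      have h3 : n + pad = a * (n / a) + a := by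
        have := Nat.div_add_mod n a
        omega
      rw [h3]
      exact dvd_add (Dvd.intro _ rfl) dvd_rfl
  -- the forward construction
  have key : ∀ (p : n.Partition), (∀ z ∈ p.parts, z ∈ Set.range x) →
      ∃ q : (n + pad).Partition, (∀ z ∈ q.parts, z ∈ Set.range y) ∧
        ∃ c, q.parts = p.parts.map f + Multiset.replicate c a := by
    intro p hp
    have hle : ∀ z ∈ p.parts, f z ≤ z := by
      intro z hz
      obtain ⟨i, rfl⟩ := hp z hz
      rw [hfx]; exact hxy i
    have hsum_le : (p.parts.map f).sum ≤ n := by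
      calc (p.parts.map f).sum ≤ (p.parts.map id).sum := by
            apply Multiset.sum_map_le_sum_map
            intro z hz; exact hle z hz
        _ = n := by rw [Multiset.map_id]; exact p.parts_sum
    have hsdvd : a ∣ (p.parts.map f).sum := by
      apply Multiset.dvd_sum
      intro z hz
      obtain ⟨w, hw, rfl⟩ := Multiset.mem_map.mp hz
      obtain ⟨i, rfl⟩ := hp w hw
      rw [hfx]; exact hdvd i
    obtain ⟨c, hc⟩ := Nat.dvd_sub hma hsdvd
    refine ⟨⟨p.parts.map f + Multiset.replicate c a, ?_, ?_⟩, ?_, c, rfl⟩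
    · intro i hi
      rcases Multiset.mem_add.mp hi with hi | hi
      · obtain ⟨w, hw, rfl⟩ := Multiset.mem_map.mp hi
        obtain ⟨j, rfl⟩ := hp w hw
        rw [hfx]
        have := hy.monotone (Nat.zero_le j)
        omega
      · rw [Multiset.eq_of_mem_replicate hi]; omega
    · rw [Multiset.sum_add, Multiset.sum_replicate, smul_eq_mul]
      have hc' : n + pad - (p.parts.map f).sum = c * a := by rw [hc, mul_comm]
      omega
    · intro z hz
      rcases Multiset.mem_add.mp hz with hz | hz
      · obtain ⟨w, hw, rfl⟩ := Multiset.mem_map.mp hz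
        obtain ⟨j, rfl⟩ := hp w hw
        rw [hfx]; exact ⟨j, rfl⟩
      · rw [Multiset.eq_of_mem_replicate hz, ← hy1]; exact ⟨0, rfl⟩
  -- build the injection
  let F : {p : n.Partition // ∀ z ∈ p.parts, z ∈ Set.range x} →
      {q : (n + pad).Partition // ∀ z ∈ q.parts, z ∈ Set.range y} :=
    fun p => ⟨(key p.1 p.2).choose, (key p.1 p.2).choose_spec.1⟩
  have hFinj : Function.Injective F := by
    intro p1 p2 hq
    obtain ⟨c1, hc1⟩ := (key p1.1 p1.2).choose_spec.2
    obtain ⟨c2, hc2⟩ := (key p2.1 p2.2).choose_spec.2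
    have heq : p1.1.parts.map f + Multiset.replicate c1 a
        = p2.1.parts.map f + Multiset.replicate c2 a := by
      rw [← hc1, ← hc2]
      exact congrArg (fun q => q.1.parts) hq
    have hmapid : ∀ (p : {p : n.Partition // ∀ z ∈ p.parts, z ∈ Set.range x}),
        (p.1.parts.map f).map g = p.1.parts := by
      intro p
      rw [Multiset.map_map]
      refine Multiset.map_congr rfl ?_ |>.trans (Multiset.map_id _)
      intro z hz
      obtain ⟨i, rfl⟩ := p.2 z hz
      simp [Function.comp, hfx, hgy]
    have hga : g a = x 0 := by rw [← hy1, hgy]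
    have heq2 : p1.1.parts + Multiset.replicate c1 (x 0)
        = p2.1.parts + Multiset.replicate c2 (x 0) := by
      have := congrArg (Multiset.map g) heq
      rwa [Multiset.map_add, Multiset.map_add, Multiset.map_replicate,
        Multiset.map_replicate, hga, hmapid p1, hmapid p2] at this
    have hsums := congrArg Multiset.sum heq2
    rw [Multiset.sum_add, Multiset.sum_add, Multiset.sum_replicate,
      Multiset.sum_replicate, p1.1.parts_sum, p2.1.parts_sum,
      smul_eq_mul, smul_eq_mul] at hsums
    have hc : c1 = c2 := Nat.eq_of_mul_eq_mul_right (hxpos 0) (by omega)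
    rw [hc] at heq2
    have hparts : p1.1.parts = p2.1.parts := by
      exact add_right_cancel heq2
    exact Subtype.ext (Nat.Partition.ext hparts)
  exact Nat.card_le_card_of_injective F hFinj
end

section
/- Fix N ≥ 2, d ≥ max{63, 46N−79}, n ≥ 7d+14, and β ≥ 0. The map φ_{(2,β)}^N defined on partitions λ of n with parts in S_d^N satisfying p_1 + α < (N−2)p_2 and ⌊(p_1+p_5)/(d−N−1)⌋ = β, sending λ to the partition of n with multiplicities q_1 = p_1 + α + (p_2+ε)(d−2N−8)/2 + 28β + (26+N)ε, q_2 = 2β+ε, q_5 = p_5 + (p_2+ε)/2 − 2β − 2ε, and q_i = p_i for i ≠ 1,2,5 (with ε the parity of p_2), is a well-defined injection into partitions of n with parts in T_{5,d}. -/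
/-- Multiplicity of the `i`-th smallest element of `Sset d N` in the partition `l`. -/
noncomputable def pmul (d N n : ℕ) (l : n.Partition) (i : ℕ) : ℕ :=
  l.parts.count (xN d N i)

/-- `α = Σ_{i ≥ 3} (x_i^N - y_i) p_i` (all terms vanish for `i > n`). -/
noncomputable def alphaZ (d N n : ℕ) (l : n.Partition) : ℤ :=
  ∑ i ∈ Finset.Icc 3 n, ((xN d N i : ℤ) - (yT d i : ℤ)) * (pmul d N n l i : ℤ)

/-- `ε` is the parity of `p_2`. -/
noncomputable def eps (d N n : ℕ) (l : n.Partition) : ℕ := pmul d N n l 2 % 2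

/-- The domain `S_{(2,β)}^N` of the map `φ_{(2,β)}^N`. -/
noncomputable def inDomain (d N n β : ℕ) (l : n.Partition) : Prop :=
  (∀ x ∈ l.parts, x ∈ Sset d N) ∧
  (pmul d N n l 1 : ℤ) + alphaZ d N n l < ((N : ℤ) - 2) * (pmul d N n l 2 : ℤ) ∧
  (pmul d N n l 1 + pmul d N n l 5) / (d - N - 1) = β

/-- The prescribed multiplicity `q_i` of `y_i` in the image partition
(`(p_2+ε)(d-2N-8)/2` is computed as `((p_2+ε)/2) * (d-2N-8)`, exact since `p_2+ε` is even). -/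
noncomputable def Qmult (d N n β : ℕ) (l : n.Partition) (i : ℕ) : ℤ :=
  if i = 1 then
    (pmul d N n l 1 : ℤ) + alphaZ d N n l
      + (((pmul d N n l 2 + eps d N n l) / 2 : ℕ) : ℤ) * ((d : ℤ) - 2 * N - 8)
      + 28 * (β : ℤ) + (26 + (N : ℤ)) * (eps d N n l : ℤ)
  else if i = 2 then 2 * (β : ℤ) + (eps d N n l : ℤ)
  else if i = 5 then
    (pmul d N n l 5 : ℤ) + (((pmul d N n l 2 + eps d N n l) / 2 : ℕ) : ℤ)
      - 2 * (β : ℤ) - 2 * (eps d N n l : ℤ)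
  else (pmul d N n l i : ℤ)

/-!
For `i ≥ 3` one has `x_i^N - y_i ≥ N - 2` (both sequences are explicit and periodic), so every
term of `α` is nonnegative. The multiplicities `q_i` are chosen so that the total weight is
unchanged: the extra parts `1`, `d + 2`, `d + 16` exactly pay for replacing each `x_i^N` by `y_i`
(the `α` term) and for the `p_2` parts of size `d - N + 4`. Nonnegativity of `q_5` follows from
`β (d - N - 1) ≤ p_1 + p_5 ≤ p_1 + α < (N - 2) p_2`, which makes `p_2` large compared with `β`.
For injectivity, `q_2` recovers `ε`, `q_i` recovers `p_i` for `i ≠ 1, 2, 5`, and `q_5` recovers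
`p_5 + (p_2 + ε)/2`; the weight then determines `p_1 + p_5` up to a multiple of `d - N - 1`, which
must vanish because `⌊(p_1 + p_5)/(d - N - 1)⌋ = β` is fixed.
-/

theorem Nat.nth_eq_of_strictMono_of_range_eq {p : ℕ → Prop} {f : ℕ → ℕ} (hf : StrictMono f)
    (hrange : Set.range f = Set.ofPred p) : Nat.nth p = f := by
  have hinf : (Set.ofPred p).Infinite := hrange ▸ Set.infinite_range_of_injective hf.injective
  exact ((Nat.nth_strictMono hinf).range_inj hf).mp (by rw [Nat.range_nth_of_infinite hinf, hrange])

theorem Nat.eq_of_add_mul_eq_of_div_eq {a b k j D : ℕ} (hD : 0 < D) (hdiv : a / D = b / D)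
    (h : a + k * D = b + j * D) : k = j := by
  wlog hkj : k ≤ j generalizing a b k j
  · exact (this hdiv.symm h.symm (by omega)).symm
  obtain ⟨t, rfl⟩ := Nat.exists_eq_add_of_le hkj
  have ha : a = b + t * D := by linarith
  rw [ha, Nat.add_mul_div_right _ _ hD] at hdiv
  omega

theorem sum_Icc_one_eq_add_erase_five {M : Type*} [AddCommMonoid M] {n : ℕ} (hn : 5 ≤ n)
    (f : ℕ → M) :
    ∑ i ∈ Finset.Icc 1 n, f i = f 1 + f 2 + f 5 + ∑ i ∈ (Finset.Icc 3 n).erase 5, f i := by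
  have h : Finset.Icc 1 n = insert 1 (insert 2 (insert 5 ((Finset.Icc 3 n).erase 5))) := by
    ext i
    simp only [Finset.mem_Icc, Finset.mem_insert, Finset.mem_erase]
    omega
  rw [h, Finset.sum_insert (by simp), Finset.sum_insert (by simp), Finset.sum_insert (by simp)]
  abel

theorem eq_of_weight_eq_of_div_eq {m a₁ a₂ a₅ b₁ b₂ b₅ e : ℕ} (hm : 2 ≤ m)
    (hw : a₁ + a₂ * (m + 4) + a₅ * (3 * m + 8) = b₁ + b₂ * (m + 4) + b₅ * (3 * m + 8))
    (h5 : a₅ + (a₂ + e) / 2 = b₅ + (b₂ + e) / 2) (ha : (a₂ + e) % 2 = 0) (hb : (b₂ + e) % 2 = 0)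
    (hdiv : (a₁ + a₅) / (m - 1) = (b₁ + b₅) / (m - 1)) : a₁ = b₁ ∧ a₂ = b₂ ∧ a₅ = b₅ := by
  have hhalf : (a₂ + e) / 2 = (b₂ + e) / 2 := by
    refine Nat.eq_of_add_mul_eq_of_div_eq (D := m - 1) (by omega) hdiv.symm ?_
    have hha : 2 * ((a₂ + e) / 2) = a₂ + e := by omega
    have hhb : 2 * ((b₂ + e) / 2) = b₂ + e := by omega
    generalize (a₂ + e) / 2 = k at hha h5 ⊢
    generalize (b₂ + e) / 2 = k' at hhb h5 ⊢
    zify [show 1 ≤ m by omega] at hw hha hhb h5 ⊢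
    linear_combination -hw - ((m : ℤ) + 4) * hha + ((m : ℤ) + 4) * hhb + (3 * (m : ℤ) + 7) * h5
  have h2 : a₂ = b₂ := by omega
  have h5' : a₅ = b₅ := by omega
  subst h2 h5'
  exact ⟨by omega, rfl, rfl⟩

namespace Nat.Partition

variable {n : ℕ} {ι : Type*} {g : ι → ℕ} {I : Finset ι}

theorem sum_count_mul_eq (l : n.Partition) (hg : Set.InjOn g I)
    (hl : ∀ x ∈ l.parts, ∃ i ∈ I, g i = x) : ∑ i ∈ I, l.parts.count (g i) * g i = n := by
  classical
  have hsub : l.parts.toFinset ⊆ I.image g := fun x hx => by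
    obtain ⟨i, hi, rfl⟩ := hl x (Multiset.mem_toFinset.mp hx)
    exact Finset.mem_image_of_mem g hi
  rw [← Finset.sum_image (f := fun x => l.parts.count x * x) hg]
  conv_rhs => rw [← l.parts_sum, Finset.sum_multiset_count_of_subset _ _ hsub]
  simp only [smul_eq_mul, mul_comm]

theorem ext_of_count_eq {l l' : n.Partition} (hl : ∀ x ∈ l.parts, ∃ i ∈ I, g i = x)
    (hl' : ∀ x ∈ l'.parts, ∃ i ∈ I, g i = x)
    (h : ∀ i ∈ I, l.parts.count (g i) = l'.parts.count (g i)) : l = l' := by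
  ext x
  by_cases hx : ∃ i ∈ I, g i = x
  · obtain ⟨i, hi, rfl⟩ := hx
    exact h i hi
  · rw [Multiset.count_eq_zero_of_notMem fun hm => hx (hl x hm),
      Multiset.count_eq_zero_of_notMem fun hm => hx (hl' x hm)]

theorem exists_count_eq (q : ι → ℕ) (hg : Set.InjOn g I) (hpos : ∀ i ∈ I, 0 < g i)
    (hsum : ∑ i ∈ I, q i * g i = n) :
    ∃ μ : n.Partition, (∀ x ∈ μ.parts, ∃ i ∈ I, g i = x) ∧
      ∀ i ∈ I, μ.parts.count (g i) = q i := by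
  classical
  have hmem (x : ℕ) (hx : x ∈ ∑ i ∈ I, Multiset.replicate (q i) (g i)) : ∃ i ∈ I, g i = x := by
    obtain ⟨i, hi, hx⟩ := Multiset.mem_sum.mp hx
    exact ⟨i, hi, (Multiset.eq_of_mem_replicate hx).symm⟩
  refine ⟨⟨∑ i ∈ I, Multiset.replicate (q i) (g i), fun hx => ?_, ?_⟩, hmem, fun i hi => ?_⟩
  · obtain ⟨i, hi, rfl⟩ := hmem _ hx
    exact hpos i hi
  · simp [Multiset.sum_sum, hsum]
  · rw [Multiset.count_sum', Finset.sum_eq_single_of_mem i hi fun j hj hji => ?_,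
      Multiset.count_replicate_self]
    rw [Multiset.count_replicate, if_neg fun h => hji (hg hj hi h)]

end Nat.Partition

-- Increasing enumerations, from index `0`, of `S_d^N` (for `m = d - N + 3`) and of `T_{5,d}`.
def sEnum (m : ℕ) : ℕ → ℕ
  | 0 => 1
  | 1 => m + 1
  | 2 => 2 * m - 1
  | k + 3 => sEnum m (k + 1) + m

def tEnum (d : ℕ) : ℕ → ℕ
  | 0 => 1
  | 1 => d + 2
  | 2 => d + 4
  | 3 => d + 8
  | 4 => d + 16
  | k + 5 => tEnum d k + 2 * d

theorem sEnum_two_mul_add (m q : ℕ) {r : ℕ} (hr : 1 ≤ r) :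
    sEnum m (2 * q + r) = q * m + sEnum m r := by
  induction q generalizing r with
  | zero => simp
  | succ q ih =>
    obtain ⟨r, rfl⟩ := Nat.exists_eq_add_of_le' hr
    rw [show 2 * (q + 1) + (r + 1) = 2 * q + r + 3 by ring, sEnum,
      show 2 * q + r + 1 = 2 * q + (r + 1) by ring, ih (by omega)]
    ring

theorem tEnum_five_mul_add (d q r : ℕ) : tEnum d (5 * q + r) = q * (2 * d) + tEnum d r := by
  induction q with
  | zero => simp
  | succ q ih =>
    rw [show 5 * (q + 1) + r = 5 * q + r + 5 by ring, tEnum, ih]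
    ring

theorem sEnum_strictMono {m : ℕ} (hm : 4 ≤ m) : StrictMono (sEnum m) := by
  refine strictMono_nat_of_lt_succ fun k => ?_
  induction k using Nat.strong_induction_on with
  | _ k ih =>
    match k with
    | 0 | 1 | 2 => simp only [sEnum]; omega
    | k + 3 => simpa only [sEnum, add_lt_add_iff_right] using ih (k + 1) (by omega)

theorem tEnum_strictMono {d : ℕ} (hd : 16 ≤ d) : StrictMono (tEnum d) := by
  refine strictMono_nat_of_lt_succ fun k => ?_
  induction k using Nat.strong_induction_on with
  | _ k ih =>
    match k with
    | 0 | 1 | 2 | 3 | 4 => simp only [tEnum]; omega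
    | k + 5 => simpa only [tEnum, add_lt_add_iff_right] using ih k (by omega)

theorem range_sEnum {m : ℕ} (hm : 4 ≤ m) :
    Set.range (sEnum m) = {x | x % m = 1 % m ∨ x % m = (m - 1) % m} \ {m - 1} := by
  have h1 : 1 % m = 1 := Nat.mod_eq_of_lt (by omega)
  have h2 : (m - 1) % m = m - 1 := Nat.mod_eq_of_lt (by omega)
  have hodd (q : ℕ) : sEnum m (2 * q + 1) = 1 + (q + 1) * m := by
    rw [sEnum_two_mul_add m q le_rfl, sEnum]; ring
  have heven (q : ℕ) : sEnum m (2 * q + 2) = (m - 1) + (q + 1) * m := by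
    rw [sEnum_two_mul_add m q (by norm_num), sEnum]
    zify [show 1 ≤ m by omega, show 1 ≤ 2 * m by omega]
    ring
  ext x
  simp only [Set.mem_range, Set.mem_sdiff, Set.mem_ofPred_eq, Set.mem_singleton_iff, h1, h2]
  constructor
  · rintro ⟨k, rfl⟩
    obtain ⟨_ | q, rfl | rfl⟩ := Nat.even_or_odd' k
    · simp only [sEnum]; omega
    · have := Nat.le_mul_of_pos_left m (Nat.add_one_pos 0)
      rw [hodd, Nat.add_mul_mod_self_right, h1]; omega
    · have := Nat.le_mul_of_pos_left m (Nat.add_one_pos q)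
      rw [show 2 * (q + 1) = 2 * q + 2 by ring, heven, Nat.add_mul_mod_self_right, h2]; omega
    · have := Nat.le_mul_of_pos_left m (Nat.add_one_pos (q + 1))
      rw [hodd, Nat.add_mul_mod_self_right, h1]; omega
  · rintro ⟨hx | hx, hne⟩ <;> have hdiv := Nat.div_add_mod x m
    · rcases Nat.eq_zero_or_pos (x / m) with h0 | hpos
      · exact ⟨0, by simp only [sEnum]; rw [h0] at hdiv; omega⟩
      · refine ⟨2 * (x / m - 1) + 1, ?_⟩
        rw [hodd, Nat.sub_add_cancel hpos]; rw [hx] at hdiv; linarith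
    · have hpos : 0 < x / m := Nat.pos_of_ne_zero fun h0 => hne (by rw [h0] at hdiv; omega)
      refine ⟨2 * (x / m - 1) + 2, ?_⟩
      rw [heven, Nat.sub_add_cancel hpos]; rw [hx] at hdiv; linarith

theorem mem_T5_iff {d : ℕ} (hd : 17 ≤ d) (y : ℕ) :
    y ∈ T5 d ↔ ∃ r < 5, y % (2 * d) = tEnum d r := by
  have h1 : 1 % (2 * d) = 1 := Nat.mod_eq_of_lt (by omega)
  have hpow {j : ℕ} (hj1 : 1 ≤ j) (hj5 : j + 1 ≤ 5) : (d + 2 ^ j) % (2 * d) = tEnum d j := by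
    have hj4 : j ≤ 4 := by omega
    rw [Nat.mod_eq_of_lt] <;> interval_cases j <;> norm_num [tEnum] <;> omega
  simp only [T5, Tset, Set.mem_ofPred_eq, h1]
  constructor
  · rintro (h | ⟨j, hj1, hj5, h⟩)
    · exact ⟨0, by norm_num, h⟩
    · exact ⟨j, by omega, h.trans (hpow hj1 hj5)⟩
  · rintro ⟨r, hr, h⟩
    obtain rfl | hr0 := Nat.eq_zero_or_pos r
    · exact Or.inl h
    · exact Or.inr ⟨r, hr0, hr, h.trans (hpow hr0 hr).symm⟩

theorem range_tEnum {d : ℕ} (hd : 17 ≤ d) : Set.range (tEnum d) = T5 d := by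
  ext y
  rw [mem_T5_iff hd]
  constructor
  · rintro ⟨k, rfl⟩
    have hlt : tEnum d (k % 5) < 2 * d := by
      have : k % 5 < 5 := Nat.mod_lt k (by norm_num)
      interval_cases k % 5 <;> simp only [tEnum] <;> omega
    refine ⟨k % 5, Nat.mod_lt k (by norm_num), ?_⟩
    conv_lhs => rw [← Nat.div_add_mod k 5, tEnum_five_mul_add]
    rw [Nat.mul_add_mod_self_right, Nat.mod_eq_of_lt hlt]
  · rintro ⟨r, -, h⟩
    exact ⟨5 * (y / (2 * d)) + r, by rw [tEnum_five_mul_add, ← h, Nat.div_add_mod']⟩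

theorem tEnum_add_le_sEnum {d N k : ℕ} (hd : 7 * N + 3 ≤ d) (hk : 2 ≤ k) :
    tEnum d k + N ≤ sEnum (d - N + 3) k + 2 := by
  -- Every ten steps `sEnum` advances by `5 (d - N + 3)` and `tEnum` by only `4 d`.
  induction k using Nat.strong_induction_on with
  | _ k ih =>
    by_cases hsmall : k ≤ 11
    · interval_cases k <;> simp only [sEnum, tEnum] <;> omega
    · obtain ⟨r, rfl⟩ : ∃ r, k = r + 10 := ⟨k - 10, by omega⟩
      have hs := sEnum_two_mul_add (d - N + 3) 5 (r := r) (by omega)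
      have ht := tEnum_five_mul_add d 2 r
      rw [show 2 * 5 + r = r + 10 by ring] at hs
      rw [show 5 * 2 + r = r + 10 by ring] at ht
      have := ih r (by omega) (by omega)
      omega

section Enumeration

variable {d N : ℕ}

theorem range_sEnum_eq_Sset (h : N < d) : Set.range (sEnum (d - N + 3)) = Sset d N := by
  rw [range_sEnum (by omega), show d - N + 3 - 1 = d - N + 2 by omega]
  rfl

theorem xN_eq_sEnum (h : N < d) (i : ℕ) : xN d N i = sEnum (d - N + 3) (i - 1) := by
  rw [xN, Nat.nth_eq_of_strictMono_of_range_eq (sEnum_strictMono (m := d - N + 3) (by omega))]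
  rw [range_sEnum_eq_Sset h]
  rfl

theorem yT_eq_tEnum (hd : 17 ≤ d) (i : ℕ) : yT d i = tEnum d (i - 1) := by
  rw [yT, Nat.nth_eq_of_strictMono_of_range_eq (tEnum_strictMono (d := d) (by omega))]
  rw [range_tEnum hd]
  rfl

theorem xN_one (h : N < d) : xN d N 1 = 1 := by rw [xN_eq_sEnum h]; rfl

theorem xN_two (h : N < d) : xN d N 2 = d - N + 4 := by rw [xN_eq_sEnum h]; rfl

theorem xN_five (h : N < d) : xN d N 5 = 3 * (d - N) + 8 := by
  rw [xN_eq_sEnum h]; simp only [Nat.add_one_sub_one, sEnum]; omega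

theorem yT_one (hd : 17 ≤ d) : yT d 1 = 1 := by rw [yT_eq_tEnum hd]; rfl

theorem yT_two (hd : 17 ≤ d) : yT d 2 = d + 2 := by rw [yT_eq_tEnum hd]; rfl

theorem yT_five (hd : 17 ≤ d) : yT d 5 = d + 16 := by rw [yT_eq_tEnum hd]; rfl

theorem le_xN (h : N < d) (i : ℕ) : i ≤ xN d N i := by
  have := (sEnum_strictMono (m := d - N + 3) (by omega)).add_le_nat (i - 1) 0
  rw [xN_eq_sEnum h]
  simp only [sEnum, add_zero] at this
  omega

theorem xN_injOn (h : N < d) : Set.InjOn (xN d N) (Set.Ici 1) := fun i hi j hj hij => by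
  rw [xN_eq_sEnum h, xN_eq_sEnum h] at hij
  have := (sEnum_strictMono (by omega)).injective hij
  simp only [Set.mem_Ici] at hi hj
  omega

theorem yT_injOn (hd : 17 ≤ d) : Set.InjOn (yT d) (Set.Ici 1) := fun i hi j hj hij => by
  rw [yT_eq_tEnum hd, yT_eq_tEnum hd] at hij
  have := (tEnum_strictMono (by omega)).injective hij
  simp only [Set.mem_Ici] at hi hj
  omega

theorem exists_xN_eq (h : N < d) {x : ℕ} (hx : x ∈ Sset d N) : ∃ i, 1 ≤ i ∧ xN d N i = x := by
  rw [← range_sEnum_eq_Sset h] at hx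
  obtain ⟨k, rfl⟩ := hx
  exact ⟨k + 1, by omega, by rw [xN_eq_sEnum h, Nat.add_sub_cancel]⟩

theorem yT_mem_T5 (hd : 17 ≤ d) (i : ℕ) : yT d i ∈ T5 d := by
  rw [← range_tEnum hd, yT_eq_tEnum hd]
  exact Set.mem_range_self _

theorem yT_pos (hd : 17 ≤ d) (i : ℕ) : 0 < yT d i := by
  rw [yT_eq_tEnum hd]
  exact lt_of_lt_of_le Nat.one_pos ((tEnum_strictMono (by omega)).monotone (Nat.zero_le _))

theorem N_sub_two_le_xN_sub_yT (hd : 17 ≤ d) (hdN : 7 * N + 3 ≤ d) {i : ℕ} (hi : 3 ≤ i) :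
    (N : ℤ) - 2 ≤ xN d N i - yT d i := by
  have := tEnum_add_le_sEnum hdN (k := i - 1) (by omega)
  rw [yT_eq_tEnum hd, xN_eq_sEnum (by omega)]
  omega

end Enumeration

section Domain

variable {d N n β : ℕ}

theorem two_mul_div_two_add_eps (l : n.Partition) :
    2 * ((pmul d N n l 2 + eps d N n l) / 2) = pmul d N n l 2 + eps d N n l := by
  unfold eps; omega

theorem Qmult_of_ne (l : n.Partition) {i : ℕ} (h1 : i ≠ 1) (h2 : i ≠ 2) (h5 : i ≠ 5) :
    Qmult d N n β l i = pmul d N n l i := by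
  simp [Qmult, h1, h2, h5]

theorem pmul_eq_zero_of_lt (h : N < d) (l : n.Partition) {i : ℕ} (hi : n < i) :
    pmul d N n l i = 0 :=
  Multiset.count_eq_zero_of_notMem fun hm => by
    have := l.le_of_mem_parts hm
    have := le_xN h i
    omega

theorem exists_mem_Icc_xN_eq (h : N < d) {l : n.Partition} (hl : ∀ x ∈ l.parts, x ∈ Sset d N) :
    ∀ x ∈ l.parts, ∃ i ∈ Finset.Icc 1 n, xN d N i = x := fun x hx => by
  obtain ⟨i, hi, rfl⟩ := exists_xN_eq h (hl x hx)
  exact ⟨i, Finset.mem_Icc.mpr ⟨hi, (le_xN h i).trans (l.le_of_mem_parts hx)⟩, rfl⟩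

theorem sum_pmul_mul_xN (h : N < d) {l : n.Partition} (hl : ∀ x ∈ l.parts, x ∈ Sset d N) :
    ∑ i ∈ Finset.Icc 1 n, pmul d N n l i * xN d N i = n :=
  l.sum_count_mul_eq ((xN_injOn h).mono fun _ hi => (Finset.mem_Icc.mp hi).1)
    (exists_mem_Icc_xN_eq h hl)

theorem alphaZ_term_nonneg (hN : 2 ≤ N) (hd : 8 * N + 16 ≤ d) (l : n.Partition) {i : ℕ}
    (hi : i ∈ Finset.Icc 3 n) : 0 ≤ ((xN d N i : ℤ) - yT d i) * pmul d N n l i := by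
  have := N_sub_two_le_xN_sub_yT (d := d) (N := N) (by omega) (by omega) (Finset.mem_Icc.mp hi).1
  exact mul_nonneg (by omega) (Nat.cast_nonneg _)

theorem alphaZ_nonneg (hN : 2 ≤ N) (hd : 8 * N + 16 ≤ d) (l : n.Partition) :
    0 ≤ alphaZ d N n l :=
  Finset.sum_nonneg fun _ hi => alphaZ_term_nonneg hN hd l hi

theorem alphaZ_term_le (hN : 2 ≤ N) (hd : 8 * N + 16 ≤ d) (l : n.Partition) {i : ℕ}
    (hi : i ∈ Finset.Icc 3 n) : ((xN d N i : ℤ) - yT d i) * pmul d N n l i ≤ alphaZ d N n l :=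
  Finset.single_le_sum (fun _ hj => alphaZ_term_nonneg hN hd l hj) hi

theorem mul_pmul_le_alphaZ (hN : 2 ≤ N) (hd : 8 * N + 16 ≤ d) (l : n.Partition) {i : ℕ}
    (hi : i ∈ Finset.Icc 3 n) : ((N : ℤ) - 2) * pmul d N n l i ≤ alphaZ d N n l :=
  (mul_le_mul_of_nonneg_right (N_sub_two_le_xN_sub_yT (by omega) (by omega)
    (Finset.mem_Icc.mp hi).1) (Nat.cast_nonneg _)).trans (alphaZ_term_le hN hd l hi)

theorem pmul_five_le_alphaZ (hN : 2 ≤ N) (hd : 8 * N + 16 ≤ d) (hn : 5 ≤ n) (l : n.Partition) :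
    (pmul d N n l 5 : ℤ) ≤ alphaZ d N n l := by
  have h5 := alphaZ_term_le hN hd l (i := 5) (Finset.mem_Icc.mpr ⟨by norm_num, hn⟩)
  rw [xN_five (by omega), yT_five (by omega)] at h5
  refine le_trans (le_mul_of_one_le_left (Nat.cast_nonneg _) ?_) h5
  push_cast [Nat.cast_sub (show N ≤ d by omega)]
  omega

theorem pmul_two_ne_one (hN : 2 ≤ N) (hd : 8 * N + 16 ≤ d) (hn : d + 2 ≤ n) {l : n.Partition}
    (hl : inDomain d N n β l) : pmul d N n l 2 ≠ 1 := by
  intro h2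
  obtain ⟨hS, hlt, -⟩ := hl
  have hα := alphaZ_nonneg hN hd l
  rw [h2, Nat.cast_one, mul_one] at hlt
  have hzero (i : ℕ) (hi : i ∈ Finset.Icc 3 n) : pmul d N n l i = 0 := by
    have := mul_pmul_le_alphaZ hN hd l hi
    by_contra hne
    nlinarith [(Nat.one_le_iff_ne_zero.mpr hne : 1 ≤ pmul d N n l i)]
  have hw := sum_pmul_mul_xN (by omega) hS
  rw [sum_Icc_one_eq_add_erase_five (by omega),
    Finset.sum_eq_zero fun i hi => by rw [hzero i (Finset.mem_of_mem_erase hi), zero_mul],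
    hzero 5 (Finset.mem_Icc.mpr ⟨by norm_num, by omega⟩), h2, xN_one (by omega),
    xN_two (by omega)] at hw
  omega

theorem seven_mul_lt_pmul_two (hN : 2 ≤ N) (hd : 8 * N + 16 ≤ d) (hn : 5 ≤ n) {l : n.Partition}
    (hl : inDomain d N n β l) : 7 * β < pmul d N n l 2 := by
  obtain ⟨-, hlt, hβ⟩ := hl
  have hβle : β * (d - N - 1) ≤ pmul d N n l 1 + pmul d N n l 5 := hβ ▸ Nat.div_mul_le_self _ _
  have h5 := pmul_five_le_alphaZ hN hd hn l
  zify at hβle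
  rw [show ((d - N - 1 : ℕ) : ℤ) = d - N - 1 by omega] at hβle
  by_contra! hle
  have : ((N : ℤ) - 2) * pmul d N n l 2 ≤ ((N : ℤ) - 2) * (7 * β) :=
    mul_le_mul_of_nonneg_left (by exact_mod_cast hle) (by omega)
  nlinarith [mul_nonneg (by omega : (0 : ℤ) ≤ d - N - 1 - 7 * (N - 2)) (Nat.cast_nonneg β)]

theorem Qmult_nonneg (hN : 2 ≤ N) (hd : 8 * N + 16 ≤ d) (hn : d + 2 ≤ n) {l : n.Partition}
    (hl : inDomain d N n β l) (i : ℕ) : 0 ≤ Qmult d N n β l i := by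
  have hα := alphaZ_nonneg hN hd l
  have h7 := seven_mul_lt_pmul_two hN hd (by omega) hl
  have h1 := pmul_two_ne_one hN hd hn hl
  unfold Qmult
  split_ifs
  · have : (0 : ℤ) ≤ ((pmul d N n l 2 + eps d N n l) / 2 : ℕ) * ((d : ℤ) - 2 * N - 8) :=
      mul_nonneg (Nat.cast_nonneg _) (by omega)
    positivity
  · positivity
  · unfold eps at *
    omega
  · positivity

theorem sum_Qmult_mul_yT (hd : 17 ≤ d) (h : N < d) (hn : 5 ≤ n) (l : n.Partition) :
    ∑ i ∈ Finset.Icc 1 n, Qmult d N n β l i * yT d i =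
      ∑ i ∈ Finset.Icc 1 n, (pmul d N n l i : ℤ) * xN d N i := by
  have h5 : 5 ∈ Finset.Icc 3 n := Finset.mem_Icc.mpr ⟨by norm_num, hn⟩
  have hα : alphaZ d N n l = ((xN d N 5 : ℤ) - yT d 5) * pmul d N n l 5 +
      ((∑ i ∈ (Finset.Icc 3 n).erase 5, (pmul d N n l i : ℤ) * xN d N i) -
        ∑ i ∈ (Finset.Icc 3 n).erase 5, (pmul d N n l i : ℤ) * yT d i) := by
    rw [alphaZ, ← Finset.add_sum_erase _ _ h5, ← Finset.sum_sub_distrib]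
    congr 1
    exact Finset.sum_congr rfl fun _ _ => by ring
  have hrest : ∑ i ∈ (Finset.Icc 3 n).erase 5, Qmult d N n β l i * yT d i =
      ∑ i ∈ (Finset.Icc 3 n).erase 5, (pmul d N n l i : ℤ) * yT d i :=
    Finset.sum_congr rfl fun i hi => by
      rw [Finset.mem_erase, Finset.mem_Icc] at hi
      rw [Qmult_of_ne l (by omega) (by omega) hi.1]
  have hhalf : (2 * ((pmul d N n l 2 + eps d N n l) / 2 : ℕ) : ℤ) = pmul d N n l 2 + eps d N n l :=
    by exact_mod_cast two_mul_div_two_add_eps l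
  rw [sum_Icc_one_eq_add_erase_five hn, sum_Icc_one_eq_add_erase_five hn, hrest]
  simp only [Qmult, if_true, show (2 : ℕ) ≠ 1 by norm_num, show (5 : ℕ) ≠ 1 by norm_num,
    show (5 : ℕ) ≠ 2 by norm_num, if_false, hα, xN_one h, xN_two h, xN_five h, yT_one hd,
    yT_two hd, yT_five hd]
  push_cast [Nat.cast_sub h.le] at hhalf ⊢
  linear_combination ((d : ℤ) - N + 4) * hhalf

theorem exists_count_yT_eq_Qmult (hN : 2 ≤ N) (hd : 8 * N + 16 ≤ d) (hn : d + 2 ≤ n)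
    {l : n.Partition} (hl : inDomain d N n β l) :
    ∃ μ : n.Partition, (∀ x ∈ μ.parts, x ∈ T5 d) ∧
      ∀ i, 1 ≤ i → (μ.parts.count (yT d i) : ℤ) = Qmult d N n β l i := by
  have hQ (i : ℕ) : ((Qmult d N n β l i).toNat : ℤ) = Qmult d N n β l i :=
    Int.toNat_of_nonneg (Qmult_nonneg hN hd hn hl i)
  have hsum : ∑ i ∈ Finset.Icc 1 n, (Qmult d N n β l i).toNat * yT d i = n := by
    have hw := sum_pmul_mul_xN (by omega) hl.1
    zify at hw ⊢
    simp_rw [hQ]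
    rw [sum_Qmult_mul_yT (by omega) (by omega) (by omega), hw]
  have hinj : Set.InjOn (yT d) (Finset.Icc 1 n) :=
    (yT_injOn (by omega)).mono fun _ hi => (Finset.mem_Icc.mp hi).1
  obtain ⟨μ, hμ, hcount⟩ :=
    Nat.Partition.exists_count_eq _ hinj (fun i _ => yT_pos (by omega) i) hsum
  refine ⟨μ, fun x hx => ?_, fun i hi => ?_⟩
  · obtain ⟨i, -, rfl⟩ := hμ x hx
    exact yT_mem_T5 (by omega) i
  by_cases hin : i ≤ n
  · rw [hcount i (Finset.mem_Icc.mpr ⟨hi, hin⟩), hQ]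
  · have hnot : yT d i ∉ μ.parts := fun hm => by
      obtain ⟨j, hj, hji⟩ := hμ _ hm
      have := yT_injOn (by omega) (Finset.mem_Icc.mp hj).1 hi hji
      have := (Finset.mem_Icc.mp hj).2
      omega
    rw [Multiset.count_eq_zero_of_notMem hnot, Qmult_of_ne l (by omega) (by omega) (by omega),
      pmul_eq_zero_of_lt (by omega) l (by omega), Nat.cast_zero]

theorem pmul_weight_eq_of_pmul_eq (h : N < d) (hn : 5 ≤ n) {l l' : n.Partition}
    (hl : ∀ x ∈ l.parts, x ∈ Sset d N) (hl' : ∀ x ∈ l'.parts, x ∈ Sset d N)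
    (hrest : ∀ i ∈ (Finset.Icc 3 n).erase 5, pmul d N n l i = pmul d N n l' i) :
    pmul d N n l 1 + pmul d N n l 2 * xN d N 2 + pmul d N n l 5 * xN d N 5 =
      pmul d N n l' 1 + pmul d N n l' 2 * xN d N 2 + pmul d N n l' 5 * xN d N 5 := by
  have hw := (sum_pmul_mul_xN h hl).trans (sum_pmul_mul_xN h hl').symm
  rw [sum_Icc_one_eq_add_erase_five hn, sum_Icc_one_eq_add_erase_five hn,
    Finset.sum_congr rfl fun i hi => by rw [hrest i hi], xN_one h] at hw
  simpa only [mul_one, add_left_inj] using hw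

theorem eq_of_Qmult_eq (hd : 8 * N + 16 ≤ d) (hn : 5 ≤ n) {l l' : n.Partition}
    (hl : inDomain d N n β l) (hl' : inDomain d N n β l')
    (hQ : ∀ i, 1 ≤ i → Qmult d N n β l i = Qmult d N n β l' i) : l = l' := by
  have hrest (i : ℕ) (hi : 1 ≤ i) (h1 : i ≠ 1) (h2 : i ≠ 2) (h5 : i ≠ 5) :
      pmul d N n l i = pmul d N n l' i := by
    simpa only [Qmult_of_ne _ h1 h2 h5, Nat.cast_inj] using hQ i hi
  have heps : eps d N n l = eps d N n l' := by
    simpa [Qmult] using hQ 2 (by norm_num)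
  have hq5 : pmul d N n l 5 + (pmul d N n l 2 + eps d N n l') / 2 =
      pmul d N n l' 5 + (pmul d N n l' 2 + eps d N n l') / 2 := by
    have := hQ 5 (by norm_num)
    simp only [Qmult, show (5 : ℕ) ≠ 1 by norm_num, show (5 : ℕ) ≠ 2 by norm_num, if_false,
      if_true, heps] at this
    zify
    push_cast at this
    linarith
  have hw := pmul_weight_eq_of_pmul_eq (by omega) hn hl.1 hl'.1 fun i hi => by
    rw [Finset.mem_erase, Finset.mem_Icc] at hi
    exact hrest i (by omega) (by omega) (by omega) hi.1
  rw [xN_two (by omega), xN_five (by omega)] at hw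
  obtain ⟨h1, h2, h5⟩ := eq_of_weight_eq_of_div_eq (e := eps d N n l') (by omega) hw
    hq5 (by unfold eps at heps ⊢; omega) (by unfold eps; omega) (hl.2.2.trans hl'.2.2.symm)
  refine Nat.Partition.ext_of_count_eq (exists_mem_Icc_xN_eq (by omega) hl.1)
    (exists_mem_Icc_xN_eq (by omega) hl'.1) fun i hi => ?_
  change pmul d N n l i = pmul d N n l' i
  by_cases hi125 : i = 1 ∨ i = 2 ∨ i = 5
  · rcases hi125 with rfl | rfl | rfl <;> assumption
  · exact hrest i (Finset.mem_Icc.mp hi).1 (by omega) (by omega) (by omega)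

end Domain

theorem stmt19 (N d n β : ℕ) (hN : 2 ≤ N) (hd : max 63 (46 * N - 79) ≤ d)
    (hn : 7 * d + 14 ≤ n) :
    (∀ l : n.Partition, inDomain d N n β l →
      ∃ μ : n.Partition, (∀ x ∈ μ.parts, x ∈ T5 d) ∧
        ∀ i, 1 ≤ i → (μ.parts.count (yT d i) : ℤ) = Qmult d N n β l i) ∧
    (∀ l l' : n.Partition, inDomain d N n β l → inDomain d N n β l' →
      (∀ i, 1 ≤ i → Qmult d N n β l i = Qmult d N n β l' i) → l = l') := by
  have hdN : 8 * N + 16 ≤ d := by omega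
  exact ⟨fun _ hl => exists_count_yT_eq_Qmult hN hdN (by omega) hl,
    fun _ _ hl hl' hQ => eq_of_Qmult_eq hdN (by omega) hl hl' hQ⟩
end
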